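/- arXiv:1711.07359 — 9 statements merged into one kernel-verified Lean document; each statement's English description precedes it below -/
import Mathlib

section
/- Let α ≥ 1 and let X' be a matching in a market. Suppose that for every hospital h there is a sequence a^h of distinct contracts in X_h such that: (i) X'_h = Ch_h(a^h), where Ch_h is an α-approximate sequential choice function for h and |(X'_h)_d| ≤ 1 for every doctor d; and (ii) every contract x ∈ X_h such that x ≻_{x_D} x' for every x' ∈ X'_{x_D} (and x ≻_{x_D} ∅ in case X'_{x_D} = ∅) appears in the sequence a^h. Then X' is an α-stable matching. (This is the key claim proving that the generalized deferred-acceptance mechanism run with α-approximate sequential choice functions always outputs an α-stable matching.) -/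
/-- A two-sided matching market with monetary transfers and budget constraints,
following Kawase–Iwasaki. `D` is the set of doctors, `H` the set of hospitals,
`X` the set of contracts; each contract has a doctor `doc x`, a hospital `hos x`,
a utility `u x ≥ 0` and a size (wage as a fraction of the budget) `s x ≥ 0`.
For each doctor `d`, `pref d` is a strict linear order on `X_d ∪ {∅}`, the
null contract `∅` being represented by `none`. -/
structure Market where
  D : Type
  H : Type
  X : Type
  fintypeX : Fintype X
  decEqX : DecidableEq X
  decEqD : DecidableEq D
  decEqH : DecidableEq H
  doc : X → D
  hos : X → H
  pref : D → Option X → Option X → Prop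
  u : X → ℝ
  s : X → ℝ
  u_nonneg : ∀ x, 0 ≤ u x
  s_nonneg : ∀ x, 0 ≤ s x
  pref_irrefl : ∀ d o, ¬ pref d o o
  pref_trans : ∀ d o₁ o₂ o₃, pref d o₁ o₂ → pref d o₂ o₃ → pref d o₁ o₃
  pref_total : ∀ d (o₁ o₂ : Option X),
    (∀ x, o₁ = some x → doc x = d) → (∀ x, o₂ = some x → doc x = d) →
    o₁ ≠ o₂ → pref d o₁ o₂ ∨ pref d o₂ o₁

attribute [instance] Market.fintypeX Market.decEqX Market.decEqD Market.decEqH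

namespace Market

variable (M : Market)

/-- `X'_d`: the contracts of `X'` associated with doctor `d`. -/
def restrD (X' : Finset M.X) (d : M.D) : Finset M.X := X'.filter (fun x => M.doc x = d)

/-- `X'_h`: the contracts of `X'` associated with hospital `h`. -/
def restrH (X' : Finset M.X) (h : M.H) : Finset M.X := X'.filter (fun x => M.hos x = h)

/-- `s(X') = Σ_{x ∈ X'} s(x)`. -/
def sSum (X' : Finset M.X) : ℝ := ∑ x ∈ X', M.s x

/-- `u(X') = Σ_{x ∈ X'} u(x)`. -/
def uSum (X' : Finset M.X) : ℝ := ∑ x ∈ X', M.u x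

/-- A matching: each doctor signs at most one contract and each hospital's
total wages are within its budget. -/
def IsMatching (X' : Finset M.X) : Prop :=
  (∀ d, (M.restrD X' d).card ≤ 1) ∧ (∀ h, M.sSum (M.restrH X' h) ≤ 1)

/-- Contract `x` is strictly preferred by its doctor to her assignment under `X'`
(to the null contract in case she is unassigned). -/
def Prefers (X' : Finset M.X) (x : M.X) : Prop :=
  (∀ x' ∈ M.restrD X' (M.doc x), M.pref (M.doc x) (some x) (some x')) ∧
  (M.restrD X' (M.doc x) = ∅ → M.pref (M.doc x) (some x) none)

/-- `X''` is an `α`-blocking coalition of hospital `h` for the matching `X'`. -/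
def IsBlocking (α : ℝ) (X' : Finset M.X) (h : M.H) (X'' : Finset M.X) : Prop :=
  (∀ x ∈ X'', M.hos x = h) ∧ M.IsMatching X'' ∧
  (∀ x ∈ X'' \ X', M.Prefers X' x) ∧
  M.uSum X'' > α * M.uSum (M.restrH X' h)

/-- `X'` is an `α`-stable matching: it is a matching admitting no `α`-blocking coalition. -/
def IsStable (α : ℝ) (X' : Finset M.X) : Prop :=
  M.IsMatching X' ∧ ∀ h X'', ¬ M.IsBlocking α X' h X''

end Market

namespace Market

variable (M : Market)

/-- `Ch` is a sequential choice function for hospital `h`: on any sequence of distinct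
contracts of `X_h` it chooses a subset of the given contracts, and once a contract is
rejected it stays rejected as the sequence is extended. -/
def IsSeqChoice (h : M.H) (Ch : List M.X → Finset M.X) : Prop :=
  (∀ l : List M.X, l.Nodup → (∀ x ∈ l, M.hos x = h) → Ch l ⊆ l.toFinset) ∧
  (∀ (l : List M.X) (x : M.X), (l ++ [x]).Nodup → (∀ y ∈ l ++ [x], M.hos y = h) →
      l.toFinset \ Ch l ⊆ (l ++ [x]).toFinset \ Ch (l ++ [x]))

/-- `Ch` is an `α`-approximate sequential choice function for hospital `h`:
on any sequence of distinct contracts of `X_h` on which the choice assigns at most one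
contract per doctor, the choice is within the budget and its utility is at least `1/α`
times the maximum utility of a feasible subset of the given contracts. -/
def IsApproxChoice (h : M.H) (α : ℝ) (Ch : List M.X → Finset M.X) : Prop :=
  ∀ l : List M.X, l.Nodup → (∀ x ∈ l, M.hos x = h) →
    (∀ d, (M.restrD (Ch l) d).card ≤ 1) →
    M.sSum (Ch l) ≤ 1 ∧
      ∀ Y : Finset M.X, Y ⊆ l.toFinset → M.sSum Y ≤ 1 →
        (∀ d, (M.restrD Y d).card ≤ 1) → M.uSum Y ≤ α * M.uSum (Ch l)

end Market

/-- If `X'` is a matching such that every hospital `h` chooses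
`X'_h` via an `α`-approximate sequential choice function applied to a sequence `a^h`
of distinct contracts of `X_h` containing every contract that its doctor strictly
prefers to her assignment, then `X'` is `α`-stable. -/
theorem generalizedDA_alpha_stable (M : Market) (α : ℝ) (hα : 1 ≤ α)
    (X' : Finset M.X) (hX' : M.IsMatching X')
    (hyp : ∀ h : M.H, ∃ (Ch : List M.X → Finset M.X) (a : List M.X),
      M.IsSeqChoice h Ch ∧ M.IsApproxChoice h α Ch ∧
      a.Nodup ∧ (∀ x ∈ a, M.hos x = h) ∧
      M.restrH X' h = Ch a ∧
      (∀ d, (M.restrD (M.restrH X' h) d).card ≤ 1) ∧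
      (∀ x : M.X, M.hos x = h → M.Prefers X' x → x ∈ a)) :
    M.IsStable α X' := by
  refine ⟨hX', ?_⟩
  intro h X'' hB
  obtain ⟨hhos, hmatch, hpref, hgt⟩ := hB
  obtain ⟨Ch, a, hseq, happrox, hnd, hah, hCh, hcard, hall⟩ := hyp h
  have hcard' : ∀ d, (M.restrD (Ch a) d).card ≤ 1 := by rw [← hCh]; exact hcard
  obtain ⟨hs1, hopt⟩ := happrox a hnd hah hcard'
  have hsub : X'' ⊆ a.toFinset := by
    intro x hx
    by_cases hx' : x ∈ X'
    · have hmem : x ∈ M.restrH X' h := Finset.mem_filter.mpr ⟨hx', hhos x hx⟩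
      rw [hCh] at hmem
      exact hseq.1 a hnd hah hmem
    · exact List.mem_toFinset.mpr
        (hall x (hhos x hx) (hpref x (Finset.mem_sdiff.mpr ⟨hx, hx'⟩)))
  have heq : M.restrH X'' h = X'' := Finset.filter_true_of_mem hhos
  have hsX'' : M.sSum X'' ≤ 1 := by
    have := hmatch.2 h
    rwa [heq] at this
  have hle := hopt X'' hsub hsX'' hmatch.1
  rw [hCh] at hgt
  linarith
end

section
/- Let 0 < s̄ < 1 and let u_1,…,u_k ≥ 0 and s_1,…,s_k be reals with 0 < s_i ≤ s̄ for all i, sorted so that u_1/s_1 ≥ u_2/s_2 ≥ … ≥ u_k/s_k, and assume Σ_{i=1}^{k} s_i > 1. Let ℓ be the largest index with Σ_{i=1}^{ℓ} s_i ≤ 1. Then for every subset I ⊆ {1,…,k} with Σ_{i∈I} s_i ≤ 1, it holds that Σ_{i=1}^{ℓ} u_i ≥ (1 − s̄)·Σ_{i∈I} u_i. (This is the quantitative core of the lemma stating that the greedy-by-density sequential choice function is 1/(1−s̄)-approximate.) -/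
/-- Let `0 < s̄ < 1`, let `u 0, …, u (k-1) ≥ 0` and `0 < s i ≤ s̄` be sorted
by nonincreasing density `u i / s i`, with total size exceeding `1`. If `ℓ` is the largest
index whose prefix fits the unit budget, then for every subset `I` of the `k` items with
total size at most `1` we have `Σ_{i<ℓ} u i ≥ (1 − s̄) · Σ_{i∈I} u i`.
(Quantitative core of: greedy-by-density is `1/(1−s̄)`-approximate.) -/
theorem greedy_density_approx (sbar : ℝ) (hs0 : 0 < sbar) (hs1 : sbar < 1) (k : ℕ)
    (u s : ℕ → ℝ) (hu : ∀ i < k, 0 ≤ u i) (hs : ∀ i < k, 0 < s i)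
    (hsb : ∀ i < k, s i ≤ sbar)
    (hsort : ∀ i j, i ≤ j → j < k → u j / s j ≤ u i / s i)
    (htot : 1 < ∑ i ∈ Finset.range k, s i)
    (ℓ : ℕ) (hℓk : ℓ ≤ k) (hfit : ∑ i ∈ Finset.range ℓ, s i ≤ 1)
    (hmax : ∀ ℓ', ℓ' ≤ k → ∑ i ∈ Finset.range ℓ', s i ≤ 1 → ℓ' ≤ ℓ)
    (I : Finset ℕ) (hI : I ⊆ Finset.range k) (hIs : ∑ i ∈ I, s i ≤ 1) :
    (1 - sbar) * ∑ i ∈ I, u i ≤ ∑ i ∈ Finset.range ℓ, u i := by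
  -- ℓ < k
  have hℓlt : ℓ < k := by
    rcases lt_or_eq_of_le hℓk with h | h
    · exact h
    · subst h; linarith
  have hsℓ : 0 < s ℓ := hs ℓ hℓlt
  have hsbℓ : s ℓ ≤ sbar := hsb ℓ hℓlt
  set ρ := u ℓ / s ℓ with hρdef
  have hρ0 : 0 ≤ ρ := div_nonneg (hu ℓ hℓlt) hsℓ.le
  set Sℓ := ∑ i ∈ Finset.range ℓ, s i with hSℓ
  set U := ∑ i ∈ Finset.range ℓ, u i with hU
  -- prefix ℓ+1 does not fit
  have hbig : 1 < Sℓ + s ℓ := by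
    by_contra h
    push_neg at h
    have h1 : ∑ i ∈ Finset.range (ℓ + 1), s i ≤ 1 := by
      rw [Finset.sum_range_succ]; exact h
    have := hmax (ℓ + 1) hℓlt h1
    omega
  have hSℓlb : 1 - sbar ≤ Sℓ := by linarith
  -- each i < ℓ has u i ≥ ρ * s i
  have h1 : ∀ i ∈ Finset.range ℓ, ρ * s i ≤ u i := by
    intro i hi
    rw [Finset.mem_range] at hi
    have hik : i < k := lt_of_lt_of_le hi hℓk
    have := hsort i ℓ hi.le hℓlt
    have hsi := hs i hik
    rw [div_le_div_iff₀ hsℓ hsi] at this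
    calc ρ * s i = u ℓ * s i / s ℓ := by rw [hρdef, div_mul_eq_mul_div]
    _ ≤ u i := by rw [div_le_iff₀ hsℓ]; linarith
  -- U ≥ ρ * Sℓ
  have hUlb : ρ * Sℓ ≤ U := by
    rw [hSℓ, hU, Finset.mul_sum]
    exact Finset.sum_le_sum h1
  -- split I
  set A := I ∩ Finset.range ℓ with hA
  set B := I \ Finset.range ℓ with hB
  have hsplitu : ∑ i ∈ I, u i = ∑ i ∈ A, u i + ∑ i ∈ B, u i :=
    (Finset.sum_inter_add_sum_sdiff I (Finset.range ℓ) u).symm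
  have hsplits : ∑ i ∈ I, s i = ∑ i ∈ A, s i + ∑ i ∈ B, s i :=
    (Finset.sum_inter_add_sum_sdiff I (Finset.range ℓ) s).symm
  -- items in B have small density
  have hBu : ∑ i ∈ B, u i ≤ ρ * ∑ i ∈ B, s i := by
    rw [Finset.mul_sum]
    apply Finset.sum_le_sum
    intro i hi
    rw [hB, Finset.mem_sdiff, Finset.mem_range] at hi
    have hik : i < k := Finset.mem_range.mp (hI hi.1)
    have hℓi : ℓ ≤ i := not_lt.mp hi.2
    have := hsort ℓ i hℓi hik
    have hsi := hs i hik
    rw [div_le_div_iff₀ hsi hsℓ] at this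
    rw [hρdef, div_mul_eq_mul_div, le_div_iff₀ hsℓ]
    linarith
  -- U - Σ_A u ≥ ρ * (Sℓ - Σ_A s)
  have hAsub : A ⊆ Finset.range ℓ := Finset.inter_subset_right
  have hcompl : ∑ i ∈ A, u i + ρ * (Sℓ - ∑ i ∈ A, s i) ≤ U := by
    have h2 : ∑ i ∈ Finset.range ℓ \ A, s i = Sℓ - ∑ i ∈ A, s i := by
      rw [hSℓ, eq_sub_iff_add_eq, Finset.sum_sdiff hAsub]
    have h3 : ∑ i ∈ A, u i + ∑ i ∈ Finset.range ℓ \ A, u i = U := by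
      rw [hU, add_comm, Finset.sum_sdiff hAsub]
    have h4 : ρ * ∑ i ∈ Finset.range ℓ \ A, s i ≤ ∑ i ∈ Finset.range ℓ \ A, u i := by
      rw [Finset.mul_sum]
      exact Finset.sum_le_sum fun i hi => h1 i (Finset.mem_sdiff.mp hi).1
    rw [← h2]
    linarith
  -- combine: Σ_I u ≤ U + ρ * (Σ_I s - Sℓ) ≤ U + ρ * sbar
  have hρSI : ρ * (∑ i ∈ I, s i - Sℓ) ≤ ρ * sbar := by
    apply mul_le_mul_of_nonneg_left _ hρ0
    linarith
  have hkey : ∑ i ∈ I, u i ≤ U + ρ * sbar := by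
    have : ∑ i ∈ I, u i ≤ U + ρ * (∑ i ∈ I, s i - Sℓ) := by
      rw [hsplitu, hsplits]
      nlinarith [hcompl, hBu]
    linarith
  have hIu0 : 0 ≤ ∑ i ∈ I, u i :=
    Finset.sum_nonneg fun i hi => hu i (Finset.mem_range.mp (hI hi))
  nlinarith [mul_le_mul_of_nonneg_left hSℓlb hρ0]
end

section
/- Let γ be a positive integer, let Y be a finite set, and let s : Y → ℝ≥0 satisfy Σ_{y∈Y} s(y) ≤ 1. Then Y can be partitioned into γ (possibly empty) sets Y^1,…,Y^γ such that for every i ∈ {1,…,γ} and every positive integer t, |{y ∈ Y^i : s(y) > 1/(t·γ)}| ≤ t. In particular, listing Y as y_1,…,y_ℓ with s(y_1) ≥ … ≥ s(y_ℓ), one has s(y_i) ≤ 1/i for every i, and the partition Y^i = {y_i, y_{γ+i}, y_{2γ+i}, …} works. -/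
open scoped Classical

/-!
Sort `Y` by decreasing size. The element of (0-based) rank `r` then has size at most
`1 / (r + 1)`, because the `r + 1` elements up to it each weigh at least as much and the total is
at most `1`. Deal the sorted list round-robin into `γ` parts: an element of part `i` of size
exceeding `1 / (t γ)` has rank below `t γ - 1`, and only `t` ranks below `t γ` are `≡ i [MOD γ]`.
-/

open Finset

theorem exists_equiv_fin_antitone_comp_symm {Y β : Type*} [Fintype Y] [LinearOrder β]
    (s : Y → β) : ∃ e : Y ≃ Fin (Fintype.card Y), Antitone (s ∘ e.symm) := by
  let f := OrderDual.toDual ∘ s ∘ (Fintype.equivFin Y).symm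
  refine ⟨(Fintype.equivFin Y).trans (Tuple.sort f).symm, ?_⟩
  exact monotone_toDual_comp_iff.mp (Tuple.monotone_sort f)

theorem Antitone.val_add_one_nsmul_le_sum {M : Type*} [AddCommMonoid M] [PartialOrder M]
    [IsOrderedAddMonoid M] {n : ℕ} {f : Fin n → M} (hf : Antitone f) (hf0 : 0 ≤ f)
    (i : Fin n) : ((i : ℕ) + 1) • f i ≤ ∑ j, f j :=
  calc ((i : ℕ) + 1) • f i = #(Iic i) • f i := by rw [Fin.card_Iic]
    _ ≤ ∑ j ∈ Iic i, f j := card_nsmul_le_sum _ _ _ fun j hj => hf (mem_Iic.mp hj)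
    _ ≤ ∑ j, f j := sum_le_univ_sum_of_nonneg hf0

theorem card_filter_mod_eq_range_mul {γ i : ℕ} (hi : i < γ) (t : ℕ) :
    #{m ∈ range (t * γ) | m % γ = i} = t := by
  have hγ : 0 < γ := i.zero_le.trans_lt hi
  have := Nat.count_modEq_card (t * γ) hγ i
  rw [Nat.count_eq_card_filter_range] at this
  simp only [Nat.ModEq, Nat.mod_eq_of_lt hi, Nat.mul_mod_left, Nat.not_lt_zero, if_false,
    add_zero, Nat.mul_div_cancel _ hγ] at this
  exact this

theorem lt_of_mul_le_one_of_one_div_lt {K : Type*} [Field K] [LinearOrder K]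
    [IsStrictOrderedRing K] {a c x : K} (hc : 0 < c) (ha : a * x ≤ 1) (hcx : 1 / c < x) :
    a < c := by
  have hx : 0 < x := (one_div_pos.mpr hc).trans hcx
  rw [one_div, inv_lt_iff_one_lt_mul₀ hc, mul_comm] at hcx
  exact lt_of_mul_lt_mul_right (ha.trans_lt hcx) hx.le

theorem partition_into_matroid_parts_general (γ : ℕ) (hγ : 0 < γ)
    (Y : Type) [Fintype Y]
    (s : Y → ℝ) (hs : ∀ y, 0 ≤ s y) (htot : ∑ y, s y ≤ 1) :
    ∃ P : Fin γ → Finset Y,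
      (∀ y : Y, ∃! i : Fin γ, y ∈ P i) ∧
      ∀ (i : Fin γ) (t : ℕ), 0 < t →
        ((P i).filter (fun y => 1 / ((t : ℝ) * (γ : ℝ)) < s y)).card ≤ t := by
  obtain ⟨e, he⟩ := exists_equiv_fin_antitone_comp_symm s
  have hrank (y : Y) : ((e y : ℝ) + 1) * s y ≤ 1 := by
    have := he.val_add_one_nsmul_le_sum (fun j => hs _) (e y)
    simp only [Function.comp_apply, e.symm_apply_apply, e.symm.sum_comp s, nsmul_eq_mul] at this
    exact_mod_cast this.trans htot
  refine ⟨fun i => {y | (e y : ℕ) % γ = i},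
    fun y => ⟨⟨(e y : ℕ) % γ, Nat.mod_lt _ hγ⟩, by simp, fun j hj => Fin.ext ?_⟩, ?_⟩
  · simp only [mem_filter, mem_univ, true_and] at hj
    exact hj.symm
  intro i t _
  calc #{y ∈ {y | (e y : ℕ) % γ = i} | 1 / ((t : ℝ) * γ) < s y}
      ≤ #{m ∈ range (t * γ) | m % γ = i} := by
        refine card_le_card_of_injOn (fun y => (e y : ℕ)) (fun y hy => ?_)
          (Fin.val_injective.comp e.injective).injOn
        simp only [coe_filter, mem_filter, mem_univ, true_and, Set.mem_ofPred_eq] at hy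
        have hlt : ((e y : ℕ) + 1 : ℝ) < t * γ :=
          lt_of_mul_le_one_of_one_div_lt (by positivity) (hrank y) hy.2
        exact mem_filter.mpr ⟨mem_range.mpr (by exact_mod_cast (lt_add_one _).trans hlt), hy.1⟩
    _ = t := card_filter_mod_eq_range_mul i.isLt t

/-- If `Y` is a finite set with nonnegative sizes summing to at most `1`,
then `Y` can be partitioned into `γ` (possibly empty) parts `P 0, …, P (γ-1)` such that
each part contains at most `t` elements of size exceeding `1/(t·γ)`, for every `t ≥ 1`. -/
theorem partition_into_matroid_parts (γ : ℕ) (hγ : 0 < γ)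
    (Y : Type) [Fintype Y] [DecidableEq Y]
    (s : Y → ℝ) (hs : ∀ y, 0 ≤ s y) (htot : ∑ y, s y ≤ 1) :
    ∃ P : Fin γ → Finset Y,
      (∀ y : Y, ∃! i : Fin γ, y ∈ P i) ∧
      ∀ (i : Fin γ) (t : ℕ), 0 < t →
        ((P i).filter (fun y => 1 / ((t : ℝ) * (γ : ℝ)) < s y)).card ≤ t :=
  partition_into_matroid_parts_general γ hγ Y s hs htot
end

section
/- Let γ be a positive integer, let S be a finite set, and let s : S → ℝ≥0 and u : S → ℝ≥0. Define F_γ = {Z ⊆ S : for every positive integer t, |{x ∈ Z : s(x) > 1/(t·γ)}| ≤ t}. Then for every subset X* ⊆ S with Σ_{x∈X*} s(x) ≤ 1, it holds that γ · max{Σ_{x∈Z} u(x) : Z ⊆ S, Z ∈ F_γ} ≥ Σ_{x∈X*} u(x). -/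
open Finset

/-
List `X*` as `x₀, x₁, …` in order of decreasing size. Since the total size is at most `1`, the
element `xᵢ` has size at most `1/(i+1)`, so every element of size exceeding `1/(tγ)` sits at a
position `i < tγ`. Split the positions into their `γ` residue classes mod `γ`: a class meets
`[0, tγ)` in at most `t` positions, so each class lies in `F_γ`, and by pigeonhole one of them
carries at least a `1/γ` share of the utility of `X*`.
-/

theorem Finset.exists_fin_embedding_antitone {α β : Type*} [LinearOrder β] (X : Finset α)
    (f : α → β) :
    ∃ (n : ℕ) (e : Fin n ↪ α), univ.map e = X ∧ Antitone (f ∘ e) := by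
  let e₀ : Fin #X ↪ α := X.equivFin.symm.toEmbedding.trans (Function.Embedding.subtype _)
  let σ := Tuple.sort (OrderDual.toDual ∘ f ∘ e₀)
  refine ⟨#X, σ.toEmbedding.trans e₀, ?_, Tuple.monotone_sort (OrderDual.toDual ∘ f ∘ e₀)⟩
  ext x
  simp only [mem_map, mem_univ, true_and]
  exact ⟨fun ⟨i, hi⟩ => hi ▸ (X.equivFin.symm (σ i)).2,
    fun hx => ⟨σ.symm (X.equivFin ⟨x, hx⟩), by simp [e₀]⟩⟩

theorem Fin.succ_nsmul_le_sum_of_antitone {M : Type*} [AddCommMonoid M] [PartialOrder M]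
    [IsOrderedAddMonoid M] {n : ℕ} {f : Fin n → M} (hf : Antitone f) (hf₀ : ∀ k, 0 ≤ f k)
    (i : Fin n) : ((i : ℕ) + 1) • f i ≤ ∑ k, f k :=
  calc ((i : ℕ) + 1) • f i = #(Iic i) • f i := by rw [Fin.card_Iic]
    _ ≤ ∑ k ∈ Iic i, f k := card_nsmul_le_sum _ _ _ fun k hk => hf (mem_Iic.mp hk)
    _ ≤ ∑ k, f k := sum_le_sum_of_subset_of_nonneg (subset_univ _) fun k _ _ => hf₀ k

theorem Fin.succ_lt_of_one_div_lt_of_antitone {n : ℕ} {f : Fin n → ℝ} (hf : Antitone f)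
    (hf₀ : ∀ k, 0 ≤ f k) (hf₁ : ∑ k, f k ≤ 1) {c : ℝ} (hc : 0 < c) {i : Fin n}
    (hi : 1 / c < f i) : (i : ℝ) + 1 < c := by
  have hprefix := Fin.succ_nsmul_le_sum_of_antitone hf hf₀ i
  rw [nsmul_eq_mul] at hprefix
  push_cast at hprefix
  rw [div_lt_iff₀ hc] at hi
  by_contra! hci
  nlinarith [mul_le_mul_of_nonneg_left hci (hf₀ i)]

theorem Nat.card_le_of_forall_mod_eq_of_lt_mul {A : Finset ℕ} {γ t j : ℕ} (hγ : 0 < γ)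
    (hA : ∀ k ∈ A, k % γ = j ∧ k < t * γ) : #A ≤ t := by
  calc #A ≤ #(range t) := by
        refine card_le_card_of_injOn (· / γ) (fun k hk => ?_) fun a ha b hb hab => ?_
        · exact mem_range.mpr ((Nat.div_lt_iff_lt_mul hγ).mpr (hA k hk).2)
        · rw [← Nat.div_add_mod a γ, ← Nat.div_add_mod b γ, (hA a ha).1, (hA b hb).1]
          exact congrArg (γ * · + j) hab
    _ = t := card_range t

theorem matroid_family_gamma_approx_general (γ : ℕ) (hγ : 0 < γ)
    (S : Type)
    (s u : S → ℝ) (hs : ∀ x, 0 ≤ s x)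
    (Xstar : Finset S) (hX : ∑ x ∈ Xstar, s x ≤ 1) :
    ∃ Z : Finset S,
      (∀ t : ℕ, 0 < t → (Z.filter (fun x => 1 / ((t : ℝ) * (γ : ℝ)) < s x)).card ≤ t) ∧
      ∑ x ∈ Xstar, u x ≤ (γ : ℝ) * ∑ x ∈ Z, u x := by
  obtain ⟨n, e, hXe, he⟩ := Xstar.exists_fin_embedding_antitone s
  have hsum (g : S → ℝ) : ∑ x ∈ Xstar, g x = ∑ i, g (e i) := by rw [← hXe, sum_map]
  have hγR : (0 : ℝ) < γ := by exact_mod_cast hγ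
  obtain ⟨j, -, hj⟩ := exists_le_sum_fiber_of_maps_to_of_nsmul_le_sum
    (f := fun i : Fin n => (i : ℕ) % γ) (t := range γ) (w := fun i => u (e i))
    (b := (∑ x ∈ Xstar, u x) / γ) (fun i _ => mem_range.mpr (Nat.mod_lt _ hγ))
    (nonempty_range_iff.mpr hγ.ne')
    (by rw [card_range, nsmul_eq_mul, mul_div_cancel₀ _ hγR.ne', hsum])
  refine ⟨({i | (i : ℕ) % γ = j} : Finset (Fin n)).map e, fun t _ => ?_, ?_⟩
  · rw [filter_map, card_map, ← card_map Fin.valEmbedding]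
    refine Nat.card_le_of_forall_mod_eq_of_lt_mul (j := j) hγ fun k hk => ?_
    obtain ⟨i, hi, rfl⟩ := mem_map.mp hk
    simp only [mem_filter, mem_univ, true_and, Function.comp_apply] at hi
    have hlt := Fin.succ_lt_of_one_div_lt_of_antitone he (fun _ => hs _)
      (by rwa [hsum] at hX) (by positivity) hi.2
    exact ⟨hi.1, by exact_mod_cast (lt_add_one _).trans hlt⟩
  · rw [sum_map, ← div_le_iff₀' hγR]
    exact hj

/-- Let `F_γ` be the family of subsets `Z` of `S` such that for every
`t ≥ 1` at most `t` elements of `Z` have size exceeding `1/(t·γ)`. Then every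
knapsack-feasible set `X*` (total size at most `1`) has utility at most `γ` times the
utility of some member of `F_γ`; in particular `γ · max{u(Z) : Z ∈ F_γ} ≥ u(X*)`. -/
theorem matroid_family_gamma_approx (γ : ℕ) (hγ : 0 < γ)
    (S : Type) [Fintype S] [DecidableEq S]
    (s u : S → ℝ) (hs : ∀ x, 0 ≤ s x) (hu : ∀ x, 0 ≤ u x)
    (Xstar : Finset S) (hX : ∑ x ∈ Xstar, s x ≤ 1) :
    ∃ Z : Finset S,
      (∀ t : ℕ, 0 < t → (Z.filter (fun x => 1 / ((t : ℝ) * (γ : ℝ)) < s x)).card ≤ t) ∧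
      ∑ x ∈ Xstar, u x ≤ (γ : ℝ) * ∑ x ∈ Z, u x :=
  matroid_family_gamma_approx_general γ hγ S s u hs Xstar hX
end

section
/- Let n ≥ 2 be an integer, let s̄ be a real with 0 ≤ s̄ < 1, and let γ = ⌈(1 + ln(n−1))/(1−s̄)⌉. Let Z be a finite set with a size function s : Z → ℝ≥0 such that |Z| ≤ n, s(x) ≤ s̄ for every x ∈ Z, and for every positive integer t, |{x ∈ Z : s(x) > 1/(t·γ)}| ≤ t. Then Σ_{x∈Z} s(x) ≤ s̄ + Σ_{t=1}^{n−1} 1/(t·γ) ≤ s̄ + (1 + ln(n−1))/γ ≤ 1. -/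
/-!
Order `Z` by decreasing size. The largest size is at most `s̄`, and for `t ≥ 1` the `(t+1)`-st
largest is at most `1/(tγ)`, since otherwise `t + 1` elements would exceed `1/(tγ)`. Summing gives
`s̄ + H_{n-1}/γ`, and `H_{n-1} ≤ 1 + ln(n-1) ≤ γ(1 - s̄)` by the choice of `γ`.
-/

open Finset

theorem sum_le_add_sum_Icc_of_card_filter_lt_le {ι : Type*} (A : Finset ι) (s : ι → ℝ)
    (c : ℕ → ℝ) {M : ℝ} (hM0 : 0 ≤ M) (hM : ∀ x ∈ A, s x ≤ M)
    (hc : ∀ t, 0 < t → #{x ∈ A | c t < s x} ≤ t) :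
    ∑ x ∈ A, s x ≤ M + ∑ t ∈ Icc 1 (#A - 1), c t := by
  classical
  suffices ∀ B ⊆ A, ∑ x ∈ B, s x ≤ M + ∑ t ∈ Icc 1 (#B - 1), c t from this A subset_rfl
  intro B
  induction B using Finset.induction_on_min_value s with
  | empty => simpa using hM0
  | insert a B haB hmin ih =>
    intro hBA
    have haA : a ∈ A := hBA (mem_insert_self a B)
    rw [sum_insert haB, card_insert_of_notMem haB, Nat.add_sub_cancel]
    rcases B.eq_empty_or_nonempty with rfl | hB
    · simpa using hM a haA
    have hk : 0 < #B := hB.card_pos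
    have ha_le : s a ≤ c #B := by
      by_contra! hlt
      have hsub : insert a B ⊆ {x ∈ A | c #B < s x} := by
        intro x hx
        rw [mem_filter]
        rcases mem_insert.1 hx with rfl | hxB
        · exact ⟨haA, hlt⟩
        · exact ⟨hBA (mem_insert_of_mem hxB), hlt.trans_le (hmin x hxB)⟩
      have := (card_le_card hsub).trans (hc _ hk)
      rw [card_insert_of_notMem haB] at this
      omega
    have hIcc : ∑ t ∈ Icc 1 #B, c t = ∑ t ∈ Icc 1 (#B - 1), c t + c #B := by
      obtain ⟨k, hkB⟩ := Nat.exists_eq_add_one_of_ne_zero hk.ne'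
      rw [hkB, sum_Icc_succ_top (Nat.le_add_left 1 k), Nat.add_sub_cancel]
    linarith [ih (insert_subset_iff.1 hBA).2]

theorem sum_Icc_one_div_mul_le_one_add_log_div (m : ℕ) {γ : ℝ} (hγ : 0 ≤ γ) :
    ∑ t ∈ Icc 1 m, 1 / ((t : ℝ) * γ) ≤ (1 + Real.log m) / γ := by
  have hH : ∑ t ∈ Icc 1 m, ((t : ℝ))⁻¹ = harmonic m := by
    simp [harmonic_eq_sum_Icc]
  calc ∑ t ∈ Icc 1 m, 1 / ((t : ℝ) * γ) = (harmonic m : ℝ) / γ := by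
        simp_rw [← hH, sum_div, one_div, mul_inv, div_eq_mul_inv]
    _ ≤ (1 + Real.log m) / γ := div_le_div_of_nonneg_right (harmonic_le_one_add_log m) hγ

theorem div_natCeil_div_le (a : ℝ) {b : ℝ} (hb : 0 < b) : a / ⌈a / b⌉₊ ≤ b := by
  rcases le_or_gt a 0 with ha | ha
  · exact (div_nonpos_of_nonpos_of_nonneg ha (Nat.cast_nonneg _)).trans hb.le
  have hceil : a / b ≤ ⌈a / b⌉₊ := Nat.le_ceil _
  rw [div_le_iff₀ (div_pos ha hb |>.trans_le hceil)]
  rwa [div_le_iff₀ hb, mul_comm] at hceil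

theorem independent_set_fits_budget_general (n : ℕ)
    (sbar : ℝ) (hs0 : 0 ≤ sbar) (hs1 : sbar < 1)
    (γ : ℕ) (hγ : γ = ⌈(1 + Real.log (n - 1 : ℕ)) / (1 - sbar)⌉₊)
    (Z : Type) [Fintype Z] (s : Z → ℝ)
    (hcard : Fintype.card Z ≤ n) (hsb : ∀ x, s x ≤ sbar)
    (hind : ∀ t : ℕ, 0 < t →
      (Finset.univ.filter (fun x : Z => 1 / ((t : ℝ) * (γ : ℝ)) < s x)).card ≤ t) :
    (∑ x, s x ≤ sbar + ∑ t ∈ Finset.Icc 1 (n - 1), 1 / ((t : ℝ) * (γ : ℝ))) ∧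
    (sbar + ∑ t ∈ Finset.Icc 1 (n - 1), 1 / ((t : ℝ) * (γ : ℝ))
        ≤ sbar + (1 + Real.log (n - 1 : ℕ)) / (γ : ℝ)) ∧
    (sbar + (1 + Real.log (n - 1 : ℕ)) / (γ : ℝ) ≤ 1) := by
  refine ⟨?_, ?_, ?_⟩
  · calc ∑ x, s x ≤ sbar + ∑ t ∈ Icc 1 (#(univ : Finset Z) - 1), 1 / ((t : ℝ) * γ) :=
          sum_le_add_sum_Icc_of_card_filter_lt_le univ s _ hs0 (fun x _ ↦ hsb x) hind
      _ ≤ sbar + ∑ t ∈ Icc 1 (n - 1), 1 / ((t : ℝ) * γ) := by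
          gcongr
          rw [card_univ]; omega
  · gcongr
    exact sum_Icc_one_div_mul_le_one_add_log_div _ γ.cast_nonneg
  · have := div_natCeil_div_le (1 + Real.log (n - 1 : ℕ)) (sub_pos.2 hs1)
    rw [← hγ] at this
    linarith

/-- Let `n ≥ 2`, `0 ≤ s̄ < 1` and `γ = ⌈(1 + ln(n−1))/(1−s̄)⌉`. If `Z` is a
finite set of at most `n` elements whose sizes are at most `s̄` and which, for every `t ≥ 1`,
contains at most `t` elements of size exceeding `1/(t·γ)`, then
`Σ_{x∈Z} s x ≤ s̄ + Σ_{t=1}^{n−1} 1/(t·γ) ≤ s̄ + (1 + ln(n−1))/γ ≤ 1`. -/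
theorem independent_set_fits_budget (n : ℕ) (hn : 2 ≤ n)
    (sbar : ℝ) (hs0 : 0 ≤ sbar) (hs1 : sbar < 1)
    (γ : ℕ) (hγ : γ = ⌈(1 + Real.log (n - 1 : ℕ)) / (1 - sbar)⌉₊)
    (Z : Type) [Fintype Z] [DecidableEq Z] (s : Z → ℝ)
    (hsnn : ∀ x, 0 ≤ s x) (hcard : Fintype.card Z ≤ n) (hsb : ∀ x, s x ≤ sbar)
    (hind : ∀ t : ℕ, 0 < t →
      (Finset.univ.filter (fun x : Z => 1 / ((t : ℝ) * (γ : ℝ)) < s x)).card ≤ t) :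
    (∑ x, s x ≤ sbar + ∑ t ∈ Finset.Icc 1 (n - 1), 1 / ((t : ℝ) * (γ : ℝ))) ∧
    (sbar + ∑ t ∈ Finset.Icc 1 (n - 1), 1 / ((t : ℝ) * (γ : ℝ))
        ≤ sbar + (1 + Real.log (n - 1 : ℕ)) / (γ : ℝ)) ∧
    (sbar + (1 + Real.log (n - 1 : ℕ)) / (γ : ℝ) ≤ 1) :=
  independent_set_fits_budget_general n sbar hs0 hs1 γ hγ Z s hcard hsb hind
end

section
/- Let E be a finite set, s : E → ℝ a function, and γ a positive integer. Then the family F = {Z ⊆ E : for every positive integer t, |{x ∈ Z : s(x) > 1/(t·γ)}| ≤ t} is the family of independent sets of a matroid on E: (i) ∅ ∈ F; (ii) if Z' ⊆ Z ∈ F then Z' ∈ F; and (iii) if Z, Z' ∈ F with |Z| < |Z'|, then there exists x ∈ Z' \ Z with Z ∪ {x} ∈ F. -/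
open scoped Classical

/-- The family `F` of subsets of `E` in which, for every `t ≥ 1`, at most `t` elements
have size exceeding `1/(t·γ)`. -/
def thresholdIndep {E : Type} [DecidableEq E] (s : E → ℝ) (γ : ℕ) (Z : Finset E) : Prop :=
  ∀ t : ℕ, 0 < t → (Z.filter (fun x => 1 / ((t : ℝ) * (γ : ℝ)) < s x)).card ≤ t

/-- The family `F = {Z ⊆ E : |{x ∈ Z : s x > 1/(t·γ)}| ≤ t for all t ≥ 1}`
is the family of independent sets of a matroid on the finite set `E`: it contains the
empty set, is downward closed, and satisfies the exchange property. -/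
theorem thresholdIndep_matroid (E : Type) [Fintype E] [DecidableEq E]
    (s : E → ℝ) (γ : ℕ) (hγ : 0 < γ) :
    thresholdIndep s γ (∅ : Finset E) ∧
    (∀ Z' Z : Finset E, Z' ⊆ Z → thresholdIndep s γ Z → thresholdIndep s γ Z') ∧
    (∀ Z Z' : Finset E, thresholdIndep s γ Z → thresholdIndep s γ Z' →
      Z.card < Z'.card → ∃ x ∈ Z' \ Z, thresholdIndep s γ (insert x Z)) := by
  have hγR : (0:ℝ) < (γ:ℝ) := by exact_mod_cast hγ
  have hmono : ∀ t t' : ℕ, 0 < t → t ≤ t' →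
      (1:ℝ) / ((t':ℝ) * γ) ≤ 1 / ((t:ℝ) * γ) := by
    intro t t' ht htt
    apply one_div_le_one_div_of_le
    · positivity
    · apply mul_le_mul_of_nonneg_right _ (le_of_lt hγR)
      exact_mod_cast htt
  refine ⟨?_, ?_, ?_⟩
  · intro t ht; simp
  · intro Z' Z hsub hZ t ht
    exact le_trans (Finset.card_le_card (Finset.filter_subset_filter _ hsub)) (hZ t ht)
  · intro Z Z' hZ hZ' hcard
    by_cases hT : ∃ t : ℕ, 0 < t ∧
        (Z.filter (fun x => 1 / ((t:ℝ) * γ) < s x)).card = t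
    · -- tight case
      obtain ⟨t0, ht0, ht0eq⟩ := hT
      set S := (Finset.Icc 1 Z.card).filter
        (fun t : ℕ => (Z.filter (fun x => 1 / ((t:ℝ) * γ) < s x)).card = t) with hS
      have ht0S : t0 ∈ S := by
        simp only [hS, Finset.mem_filter, Finset.mem_Icc]
        refine ⟨⟨ht0, ?_⟩, ht0eq⟩
        calc t0 = _ := ht0eq.symm
          _ ≤ Z.card := Finset.card_le_card (Finset.filter_subset _ _)
      have hSne : S.Nonempty := ⟨t0, ht0S⟩
      set tm := S.max' hSne with htm
      have htmS : tm ∈ S := S.max'_mem hSne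
      obtain ⟨⟨htm1, htmZ⟩, htmeq⟩ : (1 ≤ tm ∧ tm ≤ Z.card) ∧
          (Z.filter (fun x => 1 / ((tm:ℝ) * γ) < s x)).card = tm := by
        simpa [hS, Finset.mem_Icc] using htmS
      -- find x in Z' \ Z with small s
      have hx : ∃ x ∈ Z' \ Z, s x ≤ 1 / ((tm:ℝ) * γ) := by
        by_contra hcon
        push_neg at hcon
        have h1 : Z' \ Z ⊆ Z'.filter (fun x => 1 / ((tm:ℝ) * γ) < s x) := by
          intro x hxm
          rw [Finset.mem_filter]
          exact ⟨(Finset.mem_sdiff.mp hxm).1, hcon x hxm⟩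
        have h2 : (Z ∩ Z').filter (fun x => 1 / ((tm:ℝ) * γ) < s x) ⊆
            Z'.filter (fun x => 1 / ((tm:ℝ) * γ) < s x) :=
          Finset.filter_subset_filter _ (Finset.inter_subset_right)
        have hdisj : Disjoint (Z' \ Z)
            ((Z ∩ Z').filter (fun x => 1 / ((tm:ℝ) * γ) < s x)) := by
          apply Finset.disjoint_left.mpr
          intro x hx1 hx2
          exact (Finset.mem_sdiff.mp hx1).2
            (Finset.mem_inter.mp (Finset.mem_filter.mp hx2).1).1
        have hunion : (Z' \ Z).card +
            ((Z ∩ Z').filter (fun x => 1 / ((tm:ℝ) * γ) < s x)).card ≤ tm := by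
          calc (Z' \ Z).card + ((Z ∩ Z').filter (fun x => 1 / ((tm:ℝ) * γ) < s x)).card
              = ((Z' \ Z) ∪ (Z ∩ Z').filter (fun x => 1 / ((tm:ℝ) * γ) < s x)).card :=
                (Finset.card_union_of_disjoint hdisj).symm
            _ ≤ (Z'.filter (fun x => 1 / ((tm:ℝ) * γ) < s x)).card :=
                Finset.card_le_card (Finset.union_subset h1 h2)
            _ ≤ tm := hZ' tm htm1
        have hpart : (Z.filter (fun x => 1 / ((tm:ℝ) * γ) < s x)).card =
            ((Z ∩ Z').filter (fun x => 1 / ((tm:ℝ) * γ) < s x)).card +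
            ((Z \ Z').filter (fun x => 1 / ((tm:ℝ) * γ) < s x)).card := by
          rw [add_comm, ← Finset.card_union_of_disjoint
            (Finset.disjoint_filter_filter (Finset.disjoint_sdiff_inter Z Z')),
            ← Finset.filter_union, Finset.sdiff_union_inter]
        have hZZ' : (Z \ Z').card < (Z' \ Z).card := by
          have e1 := Finset.card_sdiff_add_card_inter Z Z'
          have e2 := Finset.card_sdiff_add_card_inter Z' Z
          rw [Finset.inter_comm] at e2
          omega
        have h3 : ((Z \ Z').filter (fun x => 1 / ((tm:ℝ) * γ) < s x)).card ≤
            (Z \ Z').card := Finset.card_le_card (Finset.filter_subset _ _)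
        omega
      obtain ⟨x, hxmem, hxs⟩ := hx
      refine ⟨x, hxmem, ?_⟩
      intro t ht
      by_cases htt : t ≤ tm
      · have hnot : ¬ (1 / ((t:ℝ) * γ) < s x) :=
          not_lt.mpr (le_trans hxs (hmono t tm ht htt))
        rw [Finset.filter_insert, if_neg hnot]
        exact hZ t ht
      · push_neg at htt
        have hle : (Z.filter (fun x => 1 / ((t:ℝ) * γ) < s x)).card < t := by
          rcases lt_or_eq_of_le (hZ t ht) with h | h
          · exact h
          · exfalso
            have : t ∈ S := by
              simp only [hS, Finset.mem_filter, Finset.mem_Icc]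
              refine ⟨⟨ht, ?_⟩, h⟩
              calc t = _ := h.symm
                _ ≤ Z.card := Finset.card_le_card (Finset.filter_subset _ _)
            exact absurd (S.le_max' t this) (not_le.mpr htt)
        calc ((insert x Z).filter (fun x => 1 / ((t:ℝ) * γ) < s x)).card
            ≤ (insert x (Z.filter (fun x => 1 / ((t:ℝ) * γ) < s x))).card := by
              apply Finset.card_le_card
              rw [Finset.filter_insert]
              split
              · exact subset_rfl
              · exact Finset.subset_insert _ _
          _ ≤ (Z.filter (fun x => 1 / ((t:ℝ) * γ) < s x)).card + 1 :=
              Finset.card_insert_le _ _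
          _ ≤ t := hle
    · -- no tight level
      push_neg at hT
      have hns : ¬ Z' ⊆ Z := fun h => absurd (Finset.card_le_card h) (not_le.mpr hcard)
      obtain ⟨x, hxZ', hxZ⟩ := Finset.not_subset.mp hns
      refine ⟨x, Finset.mem_sdiff.mpr ⟨hxZ', hxZ⟩, ?_⟩
      intro t ht
      have hlt : (Z.filter (fun x => 1 / ((t:ℝ) * γ) < s x)).card < t :=
        lt_of_le_of_ne (hZ t ht) (hT t ht)
      calc ((insert x Z).filter (fun x => 1 / ((t:ℝ) * γ) < s x)).card
          ≤ (insert x (Z.filter (fun x => 1 / ((t:ℝ) * γ) < s x))).card := by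
            apply Finset.card_le_card
            rw [Finset.filter_insert]
            split
            · exact subset_rfl
            · exact Finset.subset_insert _ _
        _ ≤ (Z.filter (fun x => 1 / ((t:ℝ) * γ) < s x)).card + 1 :=
            Finset.card_insert_le _ _
        _ ≤ t := hlt
end

section
/- Let S be a finite set and s : S → ℝ an injective function with s(x) > 0 for all x ∈ S. Define greedy(S) ⊆ S as the output of the following procedure: process the elements of S in increasing order of s, maintaining a set Y (initially empty), and add the current element x to Y if s(Y) + s(x) ≤ 1 (where s(Y) = Σ_{y∈Y} s(y)). Then for every x* ∉ S (with s extended injectively to x*, s(x*) > 0), |greedy(S)| ≤ |greedy(S ∪ {x*})|; that is, the smallest-size-first greedy choice is size-monotone. -/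
open scoped Classical

/-- The smallest-size-first greedy choice: process the elements of `S` in increasing order
of size `s` (equivalently, by recursion, treat the largest element last), keeping a set `Y`
(initially empty) and adding the current element `x` whenever `s(Y) + s(x) ≤ 1`. -/
noncomputable def greedy {E : Type} [DecidableEq E] (s : E → ℝ) (S : Finset E) : Finset E :=
  if hS : S.Nonempty then
    let x := Classical.choose (S.exists_max_image s hS)
    let Y := greedy s (S.erase x)
    if (∑ y ∈ Y, s y) + s x ≤ 1 then insert x Y else Y
  else ∅
termination_by S.card
decreasing_by
  exact Finset.card_erase_lt_of_mem (Classical.choose_spec (S.exists_max_image s hS)).1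
lemma greedy_empty {E : Type} [DecidableEq E] (s : E → ℝ) : greedy s (∅ : Finset E) = ∅ := by
  rw [greedy]; simp

lemma greedy_of_max {E : Type} [DecidableEq E] (s : E → ℝ) (hinj : Function.Injective s)
    {S : Finset E} {c : E} (hc : c ∈ S) (hmax : ∀ y ∈ S, s y ≤ s c) :
    greedy s S = if (∑ y ∈ greedy s (S.erase c), s y) + s c ≤ 1
      then insert c (greedy s (S.erase c)) else greedy s (S.erase c) := by
  have hS : S.Nonempty := ⟨c, hc⟩
  have hspec := Classical.choose_spec (S.exists_max_image s hS)
  have hEq : Classical.choose (S.exists_max_image s hS) = c :=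
    hinj (le_antisymm (hmax _ hspec.1) (hspec.2 _ hc))
  rw [greedy]
  simp only [dif_pos hS, hEq]

lemma greedy_subset {E : Type} [DecidableEq E] (s : E → ℝ) (S : Finset E) :
    greedy s S ⊆ S := by
  induction S using Finset.strongInduction with
  | _ S ih =>
    by_cases hS : S.Nonempty
    · rw [greedy]
      simp only [dif_pos hS]
      set c := Classical.choose (S.exists_max_image s hS) with hcdef
      have hc : c ∈ S := (Classical.choose_spec (S.exists_max_image s hS)).1
      have hsub : greedy s (S.erase c) ⊆ S :=
        (ih _ (Finset.erase_ssubset hc)).trans (Finset.erase_subset _ _)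
      split
      · exact Finset.insert_subset hc hsub
      · exact hsub
    · rw [greedy]; simp [hS]

lemma greedy_reject {E : Type} [DecidableEq E] (s : E → ℝ) (hpos : ∀ x, 0 < s x)
    (S : Finset E) : ∀ z ∈ S, z ∉ greedy s S → 1 < (∑ y ∈ greedy s S, s y) + s z := by
  induction S using Finset.strongInduction with
  | _ S ih =>
    intro z hz hzn
    have hS : S.Nonempty := ⟨z, hz⟩
    rw [greedy] at hzn ⊢
    simp only [dif_pos hS] at hzn ⊢
    set c := Classical.choose (S.exists_max_image s hS) with hcdef
    have hc : c ∈ S := (Classical.choose_spec (S.exists_max_image s hS)).1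
    split at hzn
    · rename_i hle
      rw [if_pos hle]
      have hzc : z ≠ c := fun h => hzn (h ▸ Finset.mem_insert_self _ _)
      have hz' : z ∈ S.erase c := Finset.mem_erase.2 ⟨hzc, hz⟩
      have hzn' : z ∉ greedy s (S.erase c) := fun h => hzn (Finset.mem_insert_of_mem h)
      have := ih _ (Finset.erase_ssubset hc) z hz' hzn'
      have hcn : c ∉ greedy s (S.erase c) := fun h =>
        (Finset.mem_erase.1 (greedy_subset s _ h)).1 rfl
      rw [Finset.sum_insert hcn]
      have := hpos c
      linarith
    · rename_i hgt
      push_neg at hgt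
      rw [if_neg (not_le.2 hgt)]
      rcases eq_or_ne z c with rfl | hzc
      · exact hgt
      · have hz' : z ∈ S.erase c := Finset.mem_erase.2 ⟨hzc, hz⟩
        exact ih _ (Finset.erase_ssubset hc) z hz' hzn

lemma greedy_main {E : Type} [DecidableEq E] (s : E → ℝ)
    (hinj : Function.Injective s) (hpos : ∀ x, 0 < s x) :
    ∀ n (S : Finset E), S.card = n → ∀ x, x ∉ S →
      greedy s (insert x S) = insert x (greedy s S) ∨
      ((greedy s (insert x S)).card = (greedy s S).card ∧
        ∑ y ∈ greedy s (insert x S), s y ≤ ∑ y ∈ greedy s S, s y) := by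
  intro n
  induction n using Nat.strong_induction_on with
  | _ n ih =>
    intro S hcard x hx
    by_cases hS : S.Nonempty
    · obtain ⟨m, hm, hmax⟩ := S.exists_max_image s hS
      have hxm : x ≠ m := fun h => hx (h ▸ hm)
      rcases lt_trichotomy (s x) (s m) with hlt | heq | hgt
      · -- m is the max of insert x S
        have hm' : m ∈ insert x S := Finset.mem_insert_of_mem hm
        have hmax' : ∀ y ∈ insert x S, s y ≤ s m := by
          intro y hy
          rcases Finset.mem_insert.1 hy with rfl | hy
          · exact hlt.le
          · exact hmax y hy
        have herase : (insert x S).erase m = insert x (S.erase m) := by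
          rw [Finset.erase_insert_of_ne hxm]
        have hxe : x ∉ S.erase m := fun h => hx (Finset.mem_of_mem_erase h)
        have hcard' : (S.erase m).card = n - 1 := by
          rw [Finset.card_erase_of_mem hm, hcard]
        have hn1 : n - 1 < n := by
          have : 0 < n := hcard ▸ Finset.card_pos.2 hS
          omega
        have IH := ih (n - 1) hn1 (S.erase m) hcard' x hxe
        set A' := greedy s (S.erase m) with hA'
        set B' := greedy s (insert x (S.erase m)) with hB'
        have hmA' : m ∉ A' := fun h => (Finset.mem_erase.1 (greedy_subset s _ h)).1 rfl
        have hmB' : m ∉ B' := by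
          intro h
          rcases Finset.mem_insert.1 (greedy_subset s _ h) with h' | h'
          · exact hxm h'.symm
          · exact (Finset.mem_erase.1 h').1 rfl
        have hxA' : x ∉ A' := fun h => hxe (greedy_subset s _ h)
        have hAeq := greedy_of_max s hinj hm hmax
        have hBeq := greedy_of_max s hinj hm' hmax'
        rw [herase] at hBeq
        rw [← hA'] at hAeq
        rw [← hB'] at hBeq
        rcases IH with hcase | ⟨hcardeq, hsumle⟩
        · -- B' = insert x A'
          have hsumB' : ∑ y ∈ B', s y = (∑ y ∈ A', s y) + s x := by
            rw [hcase, Finset.sum_insert hxA']; ring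
          by_cases h1 : (∑ y ∈ B', s y) + s m ≤ 1
          · have h2 : (∑ y ∈ A', s y) + s m ≤ 1 := by
              have := hpos x; rw [hsumB'] at h1; linarith
            rw [hBeq, if_pos h1, hAeq, if_pos h2, hcase, Finset.insert_comm]
            exact Or.inl rfl
          · by_cases h2 : (∑ y ∈ A', s y) + s m ≤ 1
            · rw [hBeq, if_neg h1, hAeq, if_pos h2]
              right
              constructor
              · rw [hcase, Finset.card_insert_of_notMem hxA',
                  Finset.card_insert_of_notMem hmA']
              · rw [hsumB', Finset.sum_insert hmA']
                linarith
            · rw [hBeq, if_neg h1, hAeq, if_neg h2, hcase]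
              exact Or.inl rfl
        · -- |B'| = |A'|, sum B' ≤ sum A'
          by_cases h2 : (∑ y ∈ A', s y) + s m ≤ 1
          · have h1 : (∑ y ∈ B', s y) + s m ≤ 1 := by linarith
            rw [hBeq, if_pos h1, hAeq, if_pos h2]
            right
            constructor
            · rw [Finset.card_insert_of_notMem hmB', Finset.card_insert_of_notMem hmA',
                hcardeq]
            · rw [Finset.sum_insert hmB', Finset.sum_insert hmA']
              linarith
          · have h1 : ¬ (∑ y ∈ B', s y) + s m ≤ 1 := by
              -- show sum B' + s m > 1
              by_cases hfull : insert x (S.erase m) ⊆ B'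
              · have hBfull : B' = insert x (S.erase m) :=
                  Finset.Subset.antisymm (greedy_subset s _) hfull
                have hsub : insert x A' ⊆ B' := by
                  rw [hBfull]
                  exact Finset.insert_subset_insert _ (greedy_subset s _)
                have hsum : (∑ y ∈ insert x A', s y) ≤ ∑ y ∈ B', s y :=
                  Finset.sum_le_sum_of_subset_of_nonneg hsub (fun i _ _ => (hpos i).le)
                rw [Finset.sum_insert hxA'] at hsum
                have := hpos x
                intro hcon
                linarith
              · obtain ⟨z, hz, hzn⟩ := Finset.not_subset.1 hfull
                have hrej := greedy_reject s hpos _ z hz hzn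
                have hzm : s z ≤ s m := by
                  rcases Finset.mem_insert.1 hz with rfl | hz'
                  · exact hlt.le
                  · exact hmax z (Finset.mem_of_mem_erase hz')
                intro hcon
                linarith
            rw [hBeq, if_neg h1, hAeq, if_neg h2]
            exact Or.inr ⟨hcardeq, hsumle⟩
      · exact absurd (hinj heq) hxm
      · -- x is the max of insert x S
        have hx' : x ∈ insert x S := Finset.mem_insert_self _ _
        have hmax' : ∀ y ∈ insert x S, s y ≤ s x := by
          intro y hy
          rcases Finset.mem_insert.1 hy with rfl | hy
          · exact le_rfl
          · exact (hmax y hy).trans hgt.le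
        have hBeq := greedy_of_max s hinj hx' hmax'
        rw [Finset.erase_insert hx] at hBeq
        rw [hBeq]
        split
        · exact Or.inl rfl
        · exact Or.inr ⟨rfl, le_rfl⟩
    · rw [Finset.not_nonempty_iff_eq_empty] at hS
      subst hS
      rw [greedy_empty, Finset.insert_empty]
      have hx' : x ∈ ({x} : Finset E) := Finset.mem_singleton_self x
      have hmax' : ∀ y ∈ ({x} : Finset E), s y ≤ s x := by
        intro y hy; rw [Finset.mem_singleton.1 hy]
      have := greedy_of_max s hinj hx' hmax'
      rw [Finset.erase_singleton, greedy_empty] at this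
      rw [this]
      simp only [Finset.sum_empty, zero_add]
      split
      · exact Or.inl rfl
      · exact Or.inr ⟨rfl, le_rfl⟩

/-- (Size-monotonicity of the smallest-size-first greedy choice.)
If `s` is injective with positive values, then adding a new element to the available set
never decreases the number of elements chosen by the greedy procedure. -/
theorem greedy_size_monotone {E : Type} [DecidableEq E] (s : E → ℝ)
    (hinj : Function.Injective s) (hpos : ∀ x, 0 < s x)
    (S : Finset E) (xstar : E) (hx : xstar ∉ S) :
    (greedy s S).card ≤ (greedy s (insert xstar S)).card := by
  rcases greedy_main s hinj hpos S.card S rfl xstar hx with h | ⟨h, _⟩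
  · rw [h]
    have : xstar ∉ greedy s S := fun hh => hx (greedy_subset s _ hh)
    rw [Finset.card_insert_of_notMem this]
    omega
  · omega
end

section
/- Let α > 1, let a_1,…,a_n and t be positive integers with t < a := Σ_{i=1}^n a_i, and let m = ⌈3α²⌉. Consider the market N(a,t,α) with doctors d_i^j (i ∈ {1,…,n}, j ∈ {0,1,…,m}), hospitals h^+, h^-, and h_i^j (i ∈ {1,…,n}, j ∈ {0,…,m−1}), and contracts: r^{i,1} = (d_i^0,h^+) with u = s = a_i/t; r^{i,2} = (d_i^0,h^-) with u = s = a_i/(a−t); r^{i,3} = (d_i^0,h_i^0) with u = s = 1; x^{i,j} = (d_i^j,h_i^0) with u = 2α/m, s = 1/m for j = 1,…,m; y^{i,j} = (d_i^j,h_i^{j−1}) with u = s = 1 for j = 2,…,m; z^{i,j} = (d_i^j,h_i^j) with u = 2α, s = 1 for j = 1,…,m−1; preferences: r^{i,1} ≻_{d_i^0} r^{i,2} ≻_{d_i^0} r^{i,3} ≻_{d_i^0} ∅; x^{i,1} ≻_{d_i^1} z^{i,1} ≻_{d_i^1} ∅; y^{i,j} ≻_{d_i^j} x^{i,j} ≻_{d_i^j}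 z^{i,j} ≻_{d_i^j} ∅ for j = 2,…,m−1; y^{i,m} ≻_{d_i^m} x^{i,m} ≻_{d_i^m} ∅. If there exists I* ⊆ {1,…,n} with Σ_{i∈I*} a_i = t, then the set {r^{i,1} : i ∈ I*} ∪ {r^{i,2} : i ∉ I*} ∪ ⋃_{i=1}^n ({x^{i,1}} ∪ {y^{i,2},…,y^{i,m}}) is a 1-stable matching of N(a,t,α). -/
open scoped Classical

section RankPref

/-- A strict linear order induced by a rank function (smaller rank = more preferred),
with ties broken by an encoding of the underlying countable type. -/
def rankPref {β : Type} [Encodable β] (rank : β → ℕ) (o o' : β) : Prop :=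
  rank o < rank o' ∨ (rank o = rank o' ∧ Encodable.encode o < Encodable.encode o')

theorem rankPref_irrefl {β : Type} [Encodable β] (rank : β → ℕ) (o : β) :
    ¬ rankPref rank o o := by
  rintro (h | ⟨-, h⟩) <;> exact lt_irrefl _ h

theorem rankPref_trans {β : Type} [Encodable β] (rank : β → ℕ) (o₁ o₂ o₃ : β)
    (h₁ : rankPref rank o₁ o₂) (h₂ : rankPref rank o₂ o₃) : rankPref rank o₁ o₃ := by
  rcases h₁ with h₁ | ⟨e₁, l₁⟩ <;> rcases h₂ with h₂ | ⟨e₂, l₂⟩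
  · exact Or.inl (h₁.trans h₂)
  · exact Or.inl (e₂ ▸ h₁)
  · exact Or.inl (e₁ ▸ h₂)
  · exact Or.inr ⟨e₁.trans e₂, l₁.trans l₂⟩

theorem rankPref_total {β : Type} [Encodable β] (rank : β → ℕ) (o₁ o₂ : β)
    (hne : o₁ ≠ o₂) : rankPref rank o₁ o₂ ∨ rankPref rank o₂ o₁ := by
  rcases lt_trichotomy (rank o₁) (rank o₂) with h | h | h
  · exact Or.inl (Or.inl h)
  · rcases lt_or_gt_of_ne (fun he => hne (Encodable.encode_injective he)) with h' | h'
    · exact Or.inl (Or.inr ⟨h, h'⟩)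
    · exact Or.inr (Or.inr ⟨h.symm, h'⟩)
  · exact Or.inr (Or.inl h)

end RankPref

namespace SubsetSumGen

/-- Contracts of the market `N(a,t,α)`:
`.inl (i,k)` is `r^{i,k+1}` (`k ∈ {0,1,2}`);
`.inr (.inl (i,j₀))` is `x^{i,j₀+1}` (`j₀+1 ∈ {1,…,m}`);
`.inr (.inr (.inl (i,j₀)))` is `y^{i,j₀+2}` (`j₀+2 ∈ {2,…,m}`);
`.inr (.inr (.inr (i,j₀)))` is `z^{i,j₀+1}` (`j₀+1 ∈ {1,…,m-1}`). -/
abbrev XN (n m : ℕ) :=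
  (Fin n × Fin 3) ⊕ ((Fin n × Fin m) ⊕ ((Fin n × Fin (m - 1)) ⊕ (Fin n × Fin (m - 1))))

/-- Doctors are `d_i^j` for `i ∈ {1,…,n}`, `j ∈ {0,…,m}`. -/
abbrev DN (n m : ℕ) := Fin n × Fin (m + 1)

/-- Hospitals: `.inl 0 = h⁺`, `.inl 1 = h⁻`, `.inr (i,j) = h_i^j` for `j ∈ {0,…,m-1}`. -/
abbrev HN (n m : ℕ) := Fin 2 ⊕ (Fin n × Fin m)

/-- Doctor of each contract: `r^{i,·} ↦ d_i^0`, `x^{i,j} ↦ d_i^j`, `y^{i,j} ↦ d_i^j`,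
`z^{i,j} ↦ d_i^j`. -/
def docN (n m : ℕ) : XN n m → DN n m
  | .inl (i, _) => (i, ⟨0, by omega⟩)
  | .inr (.inl (i, j₀)) => (i, ⟨(j₀ : ℕ) + 1, by have := j₀.isLt; omega⟩)
  | .inr (.inr (.inl (i, j₀))) => (i, ⟨(j₀ : ℕ) + 2, by have := j₀.isLt; omega⟩)
  | .inr (.inr (.inr (i, j₀))) => (i, ⟨(j₀ : ℕ) + 1, by have := j₀.isLt; omega⟩)

/-- Hospital of each contract: `r^{i,1} ↦ h⁺`, `r^{i,2} ↦ h⁻`, `r^{i,3} ↦ h_i^0`,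
`x^{i,j} ↦ h_i^0`, `y^{i,j} ↦ h_i^{j-1}`, `z^{i,j} ↦ h_i^j`. -/
def hosN (n m : ℕ) (hm : 0 < m) : XN n m → HN n m
  | .inl (i, k) =>
      if (k : ℕ) = 0 then .inl 0
      else if (k : ℕ) = 1 then .inl 1
      else .inr (i, ⟨0, hm⟩)
  | .inr (.inl (i, _)) => .inr (i, ⟨0, hm⟩)
  | .inr (.inr (.inl (i, j₀))) => .inr (i, ⟨(j₀ : ℕ) + 1, by have := j₀.isLt; omega⟩)
  | .inr (.inr (.inr (i, j₀))) => .inr (i, ⟨(j₀ : ℕ) + 1, by have := j₀.isLt; omega⟩)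

/-- Utilities: `u(r^{i,1}) = aᵢ/t`, `u(r^{i,2}) = aᵢ/(a−t)`, `u(r^{i,3}) = 1`,
`u(x^{i,j}) = 2α/m`, `u(y^{i,j}) = 1`, `u(z^{i,j}) = 2α`. -/
noncomputable def uN (n m : ℕ) (a : Fin n → ℕ) (t : ℕ) (α : ℝ) : XN n m → ℝ
  | .inl (i, k) =>
      if (k : ℕ) = 0 then (a i : ℝ) / (t : ℝ)
      else if (k : ℕ) = 1 then (a i : ℝ) / ((∑ j, (a j : ℝ)) - (t : ℝ))
      else 1
  | .inr (.inl _) => 2 * α / (m : ℝ)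
  | .inr (.inr (.inl _)) => 1
  | .inr (.inr (.inr _)) => 2 * α

/-- Sizes: `s(r^{i,1}) = aᵢ/t`, `s(r^{i,2}) = aᵢ/(a−t)`, `s(r^{i,3}) = 1`,
`s(x^{i,j}) = 1/m`, `s(y^{i,j}) = 1`, `s(z^{i,j}) = 1`. -/
noncomputable def sN (n m : ℕ) (a : Fin n → ℕ) (t : ℕ) : XN n m → ℝ
  | .inl (i, k) =>
      if (k : ℕ) = 0 then (a i : ℝ) / (t : ℝ)
      else if (k : ℕ) = 1 then (a i : ℝ) / ((∑ j, (a j : ℝ)) - (t : ℝ))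
      else 1
  | .inr (.inl _) => 1 / (m : ℝ)
  | .inr (.inr (.inl _)) => 1
  | .inr (.inr (.inr _)) => 1

/-- Ranks encoding the preferences
`r^{i,1} ≻_{d_i^0} r^{i,2} ≻_{d_i^0} r^{i,3} ≻_{d_i^0} ∅`,
`x^{i,1} ≻_{d_i^1} z^{i,1} ≻_{d_i^1} ∅`,
`y^{i,j} ≻_{d_i^j} x^{i,j} ≻_{d_i^j} z^{i,j} ≻_{d_i^j} ∅` (`2 ≤ j ≤ m−1`), and
`y^{i,m} ≻_{d_i^m} x^{i,m} ≻_{d_i^m} ∅`. -/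
def rankN (n m : ℕ) (d : DN n m) : Option (XN n m) → ℕ
  | none => 4
  | some (.inl (i, k)) => if i = d.1 ∧ (d.2 : ℕ) = 0 then (k : ℕ) else 9
  | some (.inr (.inl (i, j₀))) =>
      if i = d.1 ∧ (d.2 : ℕ) = (j₀ : ℕ) + 1 then (if (d.2 : ℕ) = 1 then 0 else 1) else 9
  | some (.inr (.inr (.inl (i, j₀)))) =>
      if i = d.1 ∧ (d.2 : ℕ) = (j₀ : ℕ) + 2 then 0 else 9
  | some (.inr (.inr (.inr (i, j₀)))) =>
      if i = d.1 ∧ (d.2 : ℕ) = (j₀ : ℕ) + 1 then (if (d.2 : ℕ) = 1 then 1 else 2) else 9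

/-- The market `N(a,t,α)` of the subset-sum reduction (with `m = ⌈3α²⌉`). -/
noncomputable def mkt (n m : ℕ) (a : Fin n → ℕ) (t : ℕ) (α : ℝ)
    (hm : 0 < m) (hta : (t : ℝ) < ∑ j, (a j : ℝ)) (hα : 0 ≤ α) : Market where
  D := DN n m
  H := HN n m
  X := XN n m
  fintypeX := inferInstance
  decEqX := inferInstance
  decEqD := inferInstance
  decEqH := inferInstance
  doc := docN n m
  hos := hosN n m hm
  pref := fun d => rankPref (rankN n m d)
  u := uN n m a t α
  s := sN n m a t
  u_nonneg := by
    rintro ((⟨i, k⟩) | ((⟨i, j₀⟩) | ((⟨i, j₀⟩) | (⟨i, j₀⟩))))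
    · simp only [uN]
      split_ifs
      · positivity
      · exact div_nonneg (by positivity) (by linarith)
      · norm_num
    · simp only [uN]; positivity
    · simp only [uN]; norm_num
    · simp only [uN]; positivity
  s_nonneg := by
    rintro ((⟨i, k⟩) | ((⟨i, j₀⟩) | ((⟨i, j₀⟩) | (⟨i, j₀⟩))))
    · simp only [sN]
      split_ifs
      · positivity
      · exact div_nonneg (by positivity) (by linarith)
      · norm_num
    · simp only [sN]; positivity
    · simp only [sN]; norm_num
    · simp only [sN]; norm_num
  pref_irrefl := fun d o => rankPref_irrefl _ o
  pref_trans := fun d o₁ o₂ o₃ => rankPref_trans _ o₁ o₂ o₃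
  pref_total := fun d o₁ o₂ _ _ hne => rankPref_total _ o₁ o₂ hne

/-- The claimed stable matching
`{r^{i,1} : i ∈ I*} ∪ {r^{i,2} : i ∉ I*} ∪ ⋃ᵢ ({x^{i,1}} ∪ {y^{i,2},…,y^{i,m}})`. -/
noncomputable def stableSet (n m : ℕ) (I : Finset (Fin n)) : Finset (XN n m) :=
  Finset.univ.filter (fun c => match c with
    | .inl (i, k) => ((k : ℕ) = 0 ∧ i ∈ I) ∨ ((k : ℕ) = 1 ∧ i ∉ I)
    | .inr (.inl (_, j₀)) => (j₀ : ℕ) = 0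
    | .inr (.inr (.inl _)) => True
    | .inr (.inr (.inr _)) => False)

end SubsetSumGen

/-!
Every doctor except the `d_i^0` with `i ∉ I*` holds her favourite contract, and those hold
`r^{i,2}`, so the only contracts a doctor prefers to her assignment are the `r^{i,1}` with
`i ∉ I*`, all at `h⁺`. A hospital other than `h⁺` can thus only block with a subset of its own
contracts, which is worth no more than what it has. At `h⁺` utility equals size, so a coalition
within budget is worth at most `1 = Σ_{i ∈ I*} aᵢ / t`, which `h⁺` already gets. The budgets
hold because `h⁺` and `h⁻` are filled exactly, as `Σ_{i ∈ I*} aᵢ = t` and `Σ_{i ∉ I*} aᵢ = a - t`.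
-/

namespace Market

variable (M : Market)

theorem not_isBlocking_of_forall_not_prefers {α : ℝ} (hα : 1 ≤ α) {X' : Finset M.X}
    {h : M.H} (hpref : ∀ x, M.hos x = h → ¬ M.Prefers X' x) (X'' : Finset M.X) :
    ¬ M.IsBlocking α X' h X'' := by
  rintro ⟨hhos, -, hprefers, hgt⟩
  have hsub : X'' ⊆ M.restrH X' h := fun x hx =>
    Finset.mem_filter.mpr ⟨by_contra fun hx' =>
      hpref x (hhos x hx) (hprefers x (Finset.mem_sdiff.mpr ⟨hx, hx'⟩)), hhos x hx⟩
  have hle : M.uSum X'' ≤ M.uSum (M.restrH X' h) :=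
    Finset.sum_le_sum_of_subset_of_nonneg hsub fun x _ _ => M.u_nonneg x
  have hpos : 0 ≤ M.uSum (M.restrH X' h) := Finset.sum_nonneg fun x _ => M.u_nonneg x
  linarith [le_mul_of_one_le_left hpos hα]

theorem not_isBlocking_of_u_le_s {α : ℝ} {X' : Finset M.X} {h : M.H}
    (hus : ∀ x, M.hos x = h → M.u x ≤ M.s x) (hX' : 1 ≤ α * M.uSum (M.restrH X' h))
    (X'' : Finset M.X) : ¬ M.IsBlocking α X' h X'' := by
  rintro ⟨hhos, hmatch, -, hgt⟩
  have hbudget : M.sSum X'' ≤ 1 := by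
    simpa only [restrH, Finset.filter_true_of_mem hhos] using hmatch.2 h
  have hle : M.uSum X'' ≤ M.sSum X'' := Finset.sum_le_sum fun x hx => hus x (hhos x hx)
  linarith

end Market

namespace SubsetSumGen

variable {n m : ℕ}

def assigned (I : Finset (Fin n)) (d : DN n m) : XN n m :=
  if h₀ : (d.2 : ℕ) = 0 then .inl (d.1, if d.1 ∈ I then 0 else 1)
  else if h₁ : (d.2 : ℕ) = 1 then .inr (.inl (d.1, ⟨0, by have := d.2.isLt; omega⟩))
  else .inr (.inr (.inl (d.1, ⟨d.2 - 2, by have := d.2.isLt; omega⟩)))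

variable {I : Finset (Fin n)}

theorem docN_assigned (d : DN n m) : docN n m (assigned I d) = d := by
  obtain ⟨i, _ | _ | j, _⟩ := d <;> simp [assigned, docN]

theorem mem_stableSet_iff {x : XN n m} :
    x ∈ stableSet n m I ↔ x = assigned I (docN n m x) := by
  rcases x with ⟨i, k⟩ | ⟨i, ⟨_ | j, _⟩⟩ | ⟨i, j⟩ | ⟨i, ⟨_ | j, _⟩⟩
  · fin_cases k <;> by_cases hi : i ∈ I <;> simp [stableSet, assigned, docN, hi]
  all_goals simp [stableSet, assigned, docN]

theorem filter_docN_stableSet (d : DN n m) :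
    (stableSet n m I).filter (docN n m · = d) = {assigned I d} := by
  ext x
  rw [Finset.mem_filter, Finset.mem_singleton, mem_stableSet_iff]
  constructor
  · rintro ⟨hx, rfl⟩
    exact hx
  · rintro rfl
    exact ⟨by rw [docN_assigned], docN_assigned d⟩

theorem eq_inl_of_rankPref_assigned {x : XN n m}
    (hx : rankPref (rankN n m (docN n m x)) (some x) (some (assigned I (docN n m x)))) :
    ∃ i ∉ I, x = .inl (i, 0) := by
  rcases x with ⟨i, k⟩ | ⟨i, j⟩ | ⟨i, j⟩ | ⟨i, j⟩
  · by_cases hi : i ∈ I <;> fin_cases k <;> simp_all [rankPref, rankN, docN, assigned]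
  · obtain ⟨_ | j, _⟩ := j <;> simp [rankPref, rankN, docN, assigned] at hx
  · simp [rankPref, rankN, docN, assigned] at hx
  · obtain ⟨_ | j, _⟩ := j <;> simp [rankPref, rankN, docN, assigned] at hx

section Hospitals

variable (hm : 0 < m)

theorem filter_hosN_stableSet_inr (i : Fin n) (j : Fin m) :
    (stableSet n m I).filter (hosN n m hm · = .inr (i, j)) = {assigned I (i, j.succ)} := by
  ext x
  rw [Finset.mem_filter, Finset.mem_singleton]
  obtain ⟨_ | j, _⟩ := j <;>
    rcases x with ⟨i', k⟩ | ⟨i', j', _⟩ | ⟨i', j', _⟩ | ⟨i', j', _⟩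
  all_goals try fin_cases k
  all_goals simp [stableSet, hosN, assigned, and_comm]

theorem sum_filter_hosN_stableSet_inl_zero (f : XN n m → ℝ) :
    ∑ x ∈ (stableSet n m I).filter (hosN n m hm · = .inl 0), f x = ∑ i ∈ I, f (.inl (i, 0)) := by
  have himage : (stableSet n m I).filter (hosN n m hm · = .inl 0) =
      I.image fun i => .inl (i, 0) := by
    ext x
    rcases x with ⟨i, k⟩ | ⟨i, j⟩ | ⟨i, j⟩ | ⟨i, j⟩
    · fin_cases k <;> simp [stableSet, hosN]
    all_goals simp [stableSet, hosN]
  rw [himage, Finset.sum_image fun i _ i' _ h => by simpa using h]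

theorem sum_filter_hosN_stableSet_inl_one (f : XN n m → ℝ) :
    ∑ x ∈ (stableSet n m I).filter (hosN n m hm · = .inl 1), f x =
      ∑ i ∈ Iᶜ, f (.inl (i, 1)) := by
  have himage : (stableSet n m I).filter (hosN n m hm · = .inl 1) =
      Iᶜ.image fun i => .inl (i, 1) := by
    ext x
    rcases x with ⟨i, k⟩ | ⟨i, j⟩ | ⟨i, j⟩ | ⟨i, j⟩
    · fin_cases k <;> simp [stableSet, hosN]
    all_goals simp [stableSet, hosN]
  rw [himage, Finset.sum_image fun i _ i' _ h => by simpa using h]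

theorem uN_le_sN_of_hosN_eq_inl_zero {a : Fin n → ℕ} {t : ℕ} {α : ℝ} {x : XN n m}
    (hx : hosN n m hm x = .inl 0) : uN n m a t α x ≤ sN n m a t x := by
  rcases x with ⟨i, k⟩ | ⟨i, j⟩ | ⟨i, j⟩ | ⟨i, j⟩
  · fin_cases k <;> simp_all [hosN, uN, sN]
  all_goals simp [hosN] at hx

end Hospitals

variable {a : Fin n → ℕ} {t : ℕ}

theorem sum_div_eq_one_of_sum_eq (ht : 0 < t) (hI : ∑ i ∈ I, a i = t) :
    ∑ i ∈ I, (a i : ℝ) / t = 1 := by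
  rw [← Finset.sum_div, ← Nat.cast_sum, hI, div_self (by positivity)]

theorem sum_compl_div_eq_one_of_sum_eq (hta : (t : ℝ) < ∑ j, (a j : ℝ))
    (hI : ∑ i ∈ I, a i = t) : ∑ i ∈ Iᶜ, (a i : ℝ) / (∑ j, (a j : ℝ) - t) = 1 := by
  have hcompl : ∑ i ∈ Iᶜ, (a i : ℝ) = ∑ j, (a j : ℝ) - t := by
    rw [← Finset.sum_compl_add_sum I, ← Nat.cast_sum I, hI, add_sub_cancel_right]
  rw [← Finset.sum_div, hcompl, div_self (sub_ne_zero.mpr hta.ne')]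

theorem sN_assigned_succ_le_one (i : Fin n) (j : Fin m) :
    sN n m a t (assigned I (i, j.succ)) ≤ 1 := by
  obtain ⟨_ | j, hj⟩ := j
  · simpa [assigned, sN] using inv_le_one_of_one_le₀ (Nat.one_le_cast.mpr hj)
  · simp [assigned, sN]

variable {α : ℝ} {hm : 0 < m} {hta : (t : ℝ) < ∑ j, (a j : ℝ)} {hα : 0 ≤ α}

theorem isMatching_stableSet (ht : 0 < t) (hI : ∑ i ∈ I, a i = t) :
    (mkt n m a t α hm hta hα).IsMatching (stableSet n m I) := by
  refine ⟨fun d => ?_, ?_⟩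
  · exact ((congrArg Finset.card (filter_docN_stableSet (I := I) d)).trans
      (Finset.card_singleton _)).le
  rintro (k | ⟨i, j⟩)
  · change ∑ x ∈ (stableSet n m I).filter (hosN n m hm · = .inl k), sN n m a t x ≤ 1
    fin_cases k
    · simp [sum_filter_hosN_stableSet_inl_zero, sN, sum_div_eq_one_of_sum_eq ht hI]
    · simp [sum_filter_hosN_stableSet_inl_one, sN, sum_compl_div_eq_one_of_sum_eq hta hI]
  · change ∑ x ∈ (stableSet n m I).filter (hosN n m hm · = .inr (i, j)), sN n m a t x ≤ 1
    rw [filter_hosN_stableSet_inr, Finset.sum_singleton]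
    exact sN_assigned_succ_le_one i j

theorem hosN_eq_inl_zero_of_prefers {x : XN n m}
    (hx : (mkt n m a t α hm hta hα).Prefers (stableSet n m I) x) : hosN n m hm x = .inl 0 := by
  have hmem : assigned I (docN n m x) ∈ (mkt n m a t α hm hta hα).restrD (stableSet n m I)
      ((mkt n m a t α hm hta hα).doc x) := by
    change _ ∈ (stableSet n m I).filter (docN n m · = docN n m x)
    rw [filter_docN_stableSet]
    exact Finset.mem_singleton_self _
  obtain ⟨i, -, rfl⟩ := eq_inl_of_rankPref_assigned (hx.1 _ hmem)
  rfl

theorem uSum_restrH_inl_zero_stableSet (ht : 0 < t) (hI : ∑ i ∈ I, a i = t) :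
    (mkt n m a t α hm hta hα).uSum
      ((mkt n m a t α hm hta hα).restrH (stableSet n m I) (.inl 0)) = 1 := by
  change ∑ x ∈ (stableSet n m I).filter (hosN n m hm · = .inl 0), uN n m a t α x = 1
  simp [sum_filter_hosN_stableSet_inl_zero, uN, sum_div_eq_one_of_sum_eq ht hI]

end SubsetSumGen

/-- (Yes-instance direction of the subset-sum reduction.) Let `α > 1`,
`m = ⌈3α²⌉`, and suppose `Σ_{i∈I*} aᵢ = t`. Then the set
`{r^{i,1} : i ∈ I*} ∪ {r^{i,2} : i ∉ I*} ∪ ⋃ᵢ ({x^{i,1}} ∪ {y^{i,2},…,y^{i,m}})`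
is a `1`-stable matching of the market `N(a,t,α)`. -/
theorem subsetSumGen_yes_one_stable (α : ℝ) (hα : 1 < α) (n : ℕ) (a : Fin n → ℕ) (t : ℕ)
    (ht : 0 < t) (hta : t < ∑ i, a i)
    (m : ℕ) (hm : m = ⌈3 * α ^ 2⌉₊)
    (I : Finset (Fin n)) (hI : ∑ i ∈ I, a i = t) :
    (SubsetSumGen.mkt n m a t α
        (by rw [hm]; exact Nat.ceil_pos.mpr (by positivity))
        (by exact_mod_cast hta) (by linarith)).IsStable 1
      (SubsetSumGen.stableSet n m I) := by
  refine ⟨SubsetSumGen.isMatching_stableSet ht hI, fun h => ?_⟩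
  rcases eq_or_ne h (.inl 0) with rfl | hh
  · exact Market.not_isBlocking_of_u_le_s _
      (fun x hx => SubsetSumGen.uN_le_sN_of_hosN_eq_inl_zero _ hx)
      (by rw [one_mul, SubsetSumGen.uSum_restrH_inl_zero_stableSet ht hI])
  · exact Market.not_isBlocking_of_forall_not_prefers _ le_rfl
      fun x hx hpref => hh (hx ▸ SubsetSumGen.hosN_eq_inl_zero_of_prefers hpref)
end

section
/- Let α > 1, let a_1,…,a_n and t be positive integers with t < a := Σ_{i=1}^n a_i, and let m = ⌈3α²⌉. Consider the market N(a,t,α) with doctors d_i^j (i ∈ {1,…,n}, j ∈ {0,1,…,m}), hospitals h^+, h^-, and h_i^j (i ∈ {1,…,n}, j ∈ {0,…,m−1}), and contracts: r^{i,1} = (d_i^0,h^+) with u = s = a_i/t; r^{i,2} = (d_i^0,h^-) with u = s = a_i/(a−t); r^{i,3} = (d_i^0,h_i^0) with u = s = 1; x^{i,j} = (d_i^j,h_i^0) with u = 2α/m, s = 1/m for j = 1,…,m; y^{i,j} = (d_i^j,h_i^{j−1}) with u = s = 1 for j = 2,…,m; z^{i,j} = (d_i^j,h_i^j) with u = 2α,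 s = 1 for j = 1,…,m−1; preferences: r^{i,1} ≻_{d_i^0} r^{i,2} ≻_{d_i^0} r^{i,3} ≻_{d_i^0} ∅; x^{i,1} ≻_{d_i^1} z^{i,1} ≻_{d_i^1} ∅; y^{i,j} ≻_{d_i^j} x^{i,j} ≻_{d_i^j} z^{i,j} ≻_{d_i^j} ∅ for j = 2,…,m−1; y^{i,m} ≻_{d_i^m} x^{i,m} ≻_{d_i^m} ∅. If there exists no I ⊆ {1,…,n} with Σ_{i∈I} a_i = t, then the market N(a,t,α) admits no α-stable matching. More precisely, any matching X' satisfying X' ∩ {r^{i*,1}, r^{i*,2}} = ∅ for some index i* is not α-stable. -/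
open scoped Classical

/-!
Suppose `X'` is `α`-stable but signs neither `r^{i,1}` nor `r^{i,2}`. Every hospital `h_i^j`
with `j ≥ 1` signs `y^{i,j+1}` or `z^{i,j}`, for otherwise `{y^{i,j+1}}` blocks it.

* If `r^{i,3}` is signed, the budget of `h_i^0` leaves no room for an `x^{i,j}`, so inductively
  every `z^{i,j}` is signed (else `{z^{i,j}}` blocks `h_i^j`, worth `2α` against at most `1`).
  Then no `y^{i,j}` is signed and the coalition of all `x^{i,j}`, worth `2α`, blocks `h_i^0`.
* If `r^{i,3}` is not signed, an unsigned `z^{i,p}` forces every `y^{i,q}` with `q > p`, so at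
  most one `x^{i,j}` is signed and `{r^{i,3}}` blocks `h_i^0`, as `α · 2α/m < 1` for
  `m = ⌈3α²⌉`.

So a stable matching signs `r^{i,1}` or `r^{i,2}` for every `i`, and then the budgets of `h⁺`
and `h⁻` force `∑ {aᵢ | r^{i,1} signed} = t`.
-/

namespace Market

variable {M : Market} {X' : Finset M.X}

@[simp]
theorem mem_restrD {d : M.D} {x : M.X} : x ∈ M.restrD X' d ↔ x ∈ X' ∧ M.doc x = d :=
  Finset.mem_filter

@[simp]
theorem mem_restrH {h : M.H} {x : M.X} : x ∈ M.restrH X' h ↔ x ∈ X' ∧ M.hos x = h :=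
  Finset.mem_filter

theorem uSum_le_of_subset_singleton {A : Finset M.X} {x : M.X} (h : A ⊆ {x}) :
    M.uSum A ≤ M.u x := by
  simpa [uSum] using Finset.sum_le_sum_of_subset_of_nonneg h fun y _ _ => M.u_nonneg y

theorem IsMatching.notMem_of_doc_eq (hX' : M.IsMatching X') {x y : M.X} (hx : x ∈ X')
    (hxy : x ≠ y) (hd : M.doc x = M.doc y) : y ∉ X' := fun hy =>
  hxy (Finset.card_le_one.mp (hX'.1 (M.doc x)) x (mem_restrD.mpr ⟨hx, rfl⟩) y
    (mem_restrD.mpr ⟨hy, hd.symm⟩))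

theorem IsMatching.sum_s_le_one (hX' : M.IsMatching X') {ι : Type*} {S : Finset ι}
    {f : ι → M.X} (hf : Set.InjOn f S) {h : M.H} (hS : ∀ i ∈ S, f i ∈ X' ∧ M.hos (f i) = h) :
    ∑ i ∈ S, M.s (f i) ≤ 1 := by
  rw [← Finset.sum_image hf]
  refine (Finset.sum_le_sum_of_subset_of_nonneg (fun x hx => ?_)
    fun x _ _ => M.s_nonneg x).trans (hX'.2 h)
  obtain ⟨i, hi, rfl⟩ := Finset.mem_image.mp hx
  exact mem_restrH.mpr (hS i hi)

theorem IsMatching.notMem_of_one_lt_s_add_s (hX' : M.IsMatching X') {x y : M.X} (hx : x ∈ X')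
    (hxy : x ≠ y) (hh : M.hos x = M.hos y) (hs : 1 < M.s x + M.s y) : y ∉ X' := fun hy => by
  have := hX'.sum_s_le_one (S := {x, y}) (f := id) (Set.injOn_id _) (h := M.hos x) (by aesop)
  rw [Finset.sum_pair hxy] at this
  exact absurd this (not_le.mpr hs)

theorem isMatching_of_injOn {A : Finset M.X} (hinj : Set.InjOn M.doc A) (hs : M.sSum A ≤ 1) :
    M.IsMatching A := by
  refine ⟨fun d => Finset.card_le_one.mpr fun x hx y hy => ?_, fun h => ?_⟩
  · rw [mem_restrD] at hx hy
    exact hinj hx.1 hy.1 (hx.2.trans hy.2.symm)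
  · exact (Finset.sum_le_sum_of_subset_of_nonneg (Finset.filter_subset _ _)
      fun x _ _ => M.s_nonneg x).trans hs

theorem isBlocking_singleton {α : ℝ} {x : M.X} (hx : x ∉ X') (hpref : M.Prefers X' x)
    (hs : M.s x ≤ 1) (hu : α * M.uSum (M.restrH X' (M.hos x)) < M.u x) :
    M.IsBlocking α X' (M.hos x) {x} := by
  refine ⟨by simp, isMatching_of_injOn (by simp) (by simpa [sSum] using hs), fun y hy => ?_,
    by simpa [uSum] using hu⟩
  obtain rfl : y = x := by simpa using (Finset.mem_sdiff.mp hy).1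
  exact hpref

end Market

namespace SubsetSumGen

variable {n m : ℕ}

-- `rC i k = r^{i,k+1}`, `xC i j = x^{i,j+1}`, `yC i j = y^{i,j+2}`, `zC i j = z^{i,j+1}`;
-- `yC i j` and `zC i j` are the two contracts of the hospital `h_i^{j+1}`.
def rC (i : Fin n) (k : Fin 3) : XN n m := .inl (i, k)
def xC (i : Fin n) (j : Fin m) : XN n m := .inr (.inl (i, j))
def yC (i : Fin n) (j : Fin (m - 1)) : XN n m := .inr (.inr (.inl (i, j)))
def zC (i : Fin n) (j : Fin (m - 1)) : XN n m := .inr (.inr (.inr (i, j)))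

theorem eq_of_hosN_eq_hosN_xC {hm : 0 < m} {c : XN n m} {i : Fin n} {j : Fin m}
    (h : hosN n m hm c = hosN n m hm (xC i j)) : c = rC i 2 ∨ ∃ j', c = xC i j' := by
  rcases c with ⟨i', k⟩ | ⟨i', j'⟩ | ⟨i', j'⟩ | ⟨i', j'⟩
  · fin_cases k <;> simp_all [hosN, xC, rC]
  all_goals simp_all [hosN, xC, rC, Fin.ext_iff]

theorem eq_of_hosN_eq_hosN_zC {hm : 0 < m} {c : XN n m} {i : Fin n} {j : Fin (m - 1)}
    (h : hosN n m hm c = hosN n m hm (zC i j)) : c = yC i j ∨ c = zC i j := by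
  rcases c with ⟨i', k⟩ | ⟨i', j'⟩ | ⟨i', j'⟩ | ⟨i', j'⟩
  · fin_cases k <;> simp_all [hosN, zC, Fin.ext_iff]
  all_goals simp_all [hosN, yC, zC, Fin.ext_iff]

theorem eq_of_docN_eq_docN_rC {c : XN n m} {i : Fin n} {k : Fin 3}
    (h : docN n m c = docN n m (rC i k)) : ∃ k', c = rC i k' := by
  rcases c with ⟨i', k⟩ | ⟨i', j'⟩ | ⟨i', j'⟩ | ⟨i', j'⟩
  all_goals simp_all [docN, rC, Fin.ext_iff]

theorem eq_of_docN_eq_docN_xC {c : XN n m} {i : Fin n} {j : Fin m}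
    (h : docN n m c = docN n m (xC i j)) :
    c = xC i j ∨ (∃ j', c = yC i j' ∧ (j' : ℕ) + 1 = j) ∨ (∃ j', c = zC i j' ∧ (j' : ℕ) = j) := by
  rcases c with ⟨i', k⟩ | ⟨i', j'⟩ | ⟨i', j'⟩ | ⟨i', j'⟩
  all_goals simp_all [docN, xC, yC, zC, Fin.val_inj]

theorem yC_ne_zC {i : Fin n} (j j' : Fin (m - 1)) : yC i j ≠ zC i j' := nofun
theorem zC_ne_xC {i : Fin n} (j : Fin (m - 1)) (j' : Fin m) : zC i j ≠ xC i j' := nofun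
theorem yC_ne_xC {i : Fin n} (j : Fin (m - 1)) (j' : Fin m) : yC i j ≠ xC i j' := nofun
theorem rC_ne_xC {i : Fin n} (k : Fin 3) (j : Fin m) : rC i k ≠ xC i j := nofun

theorem xC_injective (i : Fin n) : Function.Injective (xC (m := m) i) := fun _ _ h => by
  simpa [xC] using h

theorem rC_injective (k : Fin 3) : Function.Injective (fun i : Fin n => rC (m := m) i k) :=
  fun _ _ h => by simpa [rC] using h

theorem rankN_docN_lt_rankN_none (c : XN n m) :
    rankN n m (docN n m c) (some c) < rankN n m (docN n m c) none := by
  rcases c with ⟨i, k⟩ | ⟨i, j⟩ | ⟨i, j⟩ | ⟨i, j⟩ <;> grind [rankN, docN]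

variable {a : Fin n → ℕ} {t : ℕ} {α : ℝ} {hm : 0 < m} {hta : (t : ℝ) < ∑ j, (a j : ℝ)}
  {hα : 0 ≤ α}

local notation "𝒩" => mkt n m a t α hm hta hα

@[simp] theorem mkt_doc : (𝒩).doc = docN n m := rfl
@[simp] theorem mkt_hos : (𝒩).hos = hosN n m hm := rfl
@[simp] theorem mkt_u : (𝒩).u = uN n m a t α := rfl
@[simp] theorem mkt_s : (𝒩).s = sN n m a t := rfl

variable {X' : Finset (XN n m)} {i : Fin n}

theorem prefers_of_rankN_lt {c : XN n m}
    (h : ∀ x ∈ X', docN n m x = docN n m c →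
      rankN n m (docN n m c) (some c) < rankN n m (docN n m c) (some x)) :
    (𝒩).Prefers X' c :=
  ⟨fun x hx => Or.inl (h x (Market.mem_restrD.mp hx).1 (Market.mem_restrD.mp hx).2),
    fun _ => Or.inl (rankN_docN_lt_rankN_none c)⟩

theorem prefers_yC {j : Fin (m - 1)} (hy : yC i j ∉ X') : (𝒩).Prefers X' (yC i j) := by
  refine prefers_of_rankN_lt fun c hc hd => ?_
  rcases eq_of_docN_eq_docN_xC (j := (⟨j + 1, by omega⟩ : Fin m)) hd with
    rfl | ⟨j', rfl, hj'⟩ | ⟨j', rfl, hj'⟩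
  · grind [rankN, docN, xC, yC]
  · obtain rfl : j' = j := Fin.ext (by simpa using hj')
    exact absurd hc hy
  · grind [rankN, docN, yC, zC]

theorem prefers_xC {j : Fin m} (hx : xC i j ∉ X')
    (hy : ∀ j' : Fin (m - 1), (j' : ℕ) + 1 = j → yC i j' ∉ X') : (𝒩).Prefers X' (xC i j) := by
  refine prefers_of_rankN_lt fun c hc hd => ?_
  rcases eq_of_docN_eq_docN_xC hd with rfl | ⟨j', rfl, hj'⟩ | ⟨j', rfl, hj'⟩
  · exact absurd hc hx
  · exact absurd hc (hy j' hj')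
  · grind [rankN, docN, xC, zC]

theorem prefers_of_forall_docN_ne {c : XN n m} (h : ∀ x ∈ X', docN n m x ≠ docN n m c) :
    (𝒩).Prefers X' c :=
  prefers_of_rankN_lt fun x hx hd => absurd hd (h x hx)

theorem prefers_zC {j : Fin (m - 1)} (hx : xC i ⟨j, by omega⟩ ∉ X')
    (hy : ∀ j' : Fin (m - 1), (j' : ℕ) + 1 = j → yC i j' ∉ X') (hz : zC i j ∉ X') :
    (𝒩).Prefers X' (zC i j) := by
  refine prefers_of_forall_docN_ne fun c hc hd => ?_
  rcases eq_of_docN_eq_docN_xC (j := ⟨j, by omega⟩) hd with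
    rfl | ⟨j', rfl, hj'⟩ | ⟨j', rfl, hj'⟩
  · exact hx hc
  · exact hy j' hj' hc
  · obtain rfl : j' = j := Fin.ext hj'
    exact hz hc

theorem prefers_rC_two (h : ∀ k, rC i k ∉ X') : (𝒩).Prefers X' (rC i 2) :=
  prefers_of_forall_docN_ne fun c hc hd => by
    obtain ⟨k, rfl⟩ := eq_of_docN_eq_docN_rC hd
    exact h k hc

def xCs (i : Fin n) : Finset (XN n m) := Finset.univ.map ⟨xC i, xC_injective i⟩

theorem mem_xCs {c : XN n m} : c ∈ xCs i ↔ ∃ j, c = xC i j := by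
  simp [xCs, eq_comm]

theorem sSum_xCs : (𝒩).sSum (xCs i) = 1 := by
  change ∑ c ∈ xCs i, sN n m a t c = 1
  rw [xCs, Finset.sum_map]
  simp [sN, xC, hm.ne']

theorem uSum_xCs : (𝒩).uSum (xCs i) = 2 * α := by
  change ∑ c ∈ xCs i, uN n m a t α c = 2 * α
  rw [xCs, Finset.sum_map]
  simp only [uN, Function.Embedding.coeFn_mk, xC, Finset.sum_const, Finset.card_univ,
    Fintype.card_fin, nsmul_eq_mul]
  field_simp

theorem isMatching_xCs : (𝒩).IsMatching (xCs i) := by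
  refine Market.isMatching_of_injOn (fun c hc c' hc' hd => ?_) sSum_xCs.le
  obtain ⟨⟨j, rfl⟩, ⟨j', rfl⟩⟩ := And.intro (mem_xCs.mp hc) (mem_xCs.mp hc')
  change docN n m (xC i j) = docN n m (xC i j') at hd
  obtain rfl : j = j' := by simpa [docN, xC, Fin.val_inj] using hd
  rfl

theorem yC_mem_or_zC_mem (hX : (𝒩).IsStable α X') (j : Fin (m - 1)) :
    yC i j ∈ X' ∨ zC i j ∈ X' := by
  by_contra! h
  have hempty : (𝒩).restrH X' ((𝒩).hos (yC i j)) = ∅ := by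
    refine Finset.eq_empty_of_forall_notMem fun c hc => ?_
    obtain ⟨hcX, hch⟩ := Market.mem_restrH.mp hc
    rcases eq_of_hosN_eq_hosN_zC (j := j) hch with rfl | rfl
    exacts [h.1 hcX, h.2 hcX]
  refine hX.2 _ _ (Market.isBlocking_singleton h.1 (prefers_yC h.1) (by simp [sN, yC]) ?_)
  rw [hempty]
  simp [Market.uSum, uN, yC]

theorem zC_notMem_of_yC_mem (hX : (𝒩).IsMatching X') {j : Fin (m - 1)} (hy : yC i j ∈ X') :
    zC i j ∉ X' :=
  hX.notMem_of_one_lt_s_add_s hy (yC_ne_zC j j) rfl (by norm_num [sN, yC, zC])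

theorem yC_notMem_of_zC_mem (hX : (𝒩).IsMatching X') {j : Fin (m - 1)} (hz : zC i j ∈ X') :
    yC i j ∉ X' := fun hy => zC_notMem_of_yC_mem hX hy hz

theorem xC_notMem_of_rC_two_mem (hX : (𝒩).IsMatching X') (hr : rC i 2 ∈ X') (j : Fin m) :
    xC i j ∉ X' :=
  hX.notMem_of_one_lt_s_add_s hr (rC_ne_xC 2 j) rfl (by simp [sN, rC, xC, hm])

theorem yC_mem_of_zC_notMem (hX : (𝒩).IsStable α X') {j : Fin (m - 1)} (hz : zC i j ∉ X')
    (k : ℕ) (hk : k < m - 1) (hjk : (j : ℕ) ≤ k) : yC i ⟨k, hk⟩ ∈ X' := by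
  induction k, hjk using Nat.le_induction with
  | base => exact (yC_mem_or_zC_mem hX j).resolve_right hz
  | succ k _ ih =>
    refine (yC_mem_or_zC_mem hX _).resolve_right ?_
    exact hX.1.notMem_of_doc_eq (ih (by omega)) (yC_ne_zC _ _) rfl

theorem not_lt_of_xC_mem (hX : (𝒩).IsStable α X') {p q : Fin m} (hp : xC i p ∈ X')
    (hq : xC i q ∈ X') : ¬ p < q := fun hpq => by
  -- `zC i p` shares its doctor with `xC i p`, so all later `y`s are signed, among them the one
  -- sharing its doctor with `xC i q`.
  have hzp : zC i ⟨p, by omega⟩ ∉ X' := hX.1.notMem_of_doc_eq hp (zC_ne_xC _ _).symm rfl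
  have hy := yC_mem_of_zC_notMem hX hzp (q - 1) (by omega) (by simp; omega)
  have hd : docN n m (yC i ⟨q - 1, by omega⟩) = docN n m (xC i q) := by
    simp only [docN, yC, xC, Prod.mk.injEq, Fin.mk.injEq, true_and]
    omega
  exact hX.1.notMem_of_doc_eq hy (yC_ne_xC _ _) hd hq

theorem xC_eq_of_mem (hX : (𝒩).IsStable α X') {p q : Fin m} (hp : xC i p ∈ X')
    (hq : xC i q ∈ X') : p = q :=
  le_antisymm (not_lt.mp (not_lt_of_xC_mem hX hq hp)) (not_lt.mp (not_lt_of_xC_mem hX hp hq))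

theorem not_isStable_of_forall_rC_notMem (hm2 : 2 * α ^ 2 < m)
    (hr : ∀ k, rC i k ∉ X') : ¬ (𝒩).IsStable α X' := fun hX => by
  obtain ⟨p, hp⟩ : ∃ p, ∀ q, xC i q ∈ X' → q = p := by
    by_cases hx : ∃ p, xC i p ∈ X'
    · obtain ⟨p, hp⟩ := hx
      exact ⟨p, fun q hq => xC_eq_of_mem hX hq hp⟩
    · exact ⟨⟨0, hm⟩, fun q hq => absurd ⟨q, hq⟩ hx⟩
  have hsub : (𝒩).restrH X' ((𝒩).hos (rC i 2)) ⊆ {xC i p} := fun c hc => by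
    obtain ⟨hcX, hch⟩ := Market.mem_restrH.mp hc
    rcases eq_of_hosN_eq_hosN_xC (j := p) hch with rfl | ⟨q, rfl⟩
    · exact absurd hcX (hr 2)
    · rw [hp q hcX]
      exact Finset.mem_singleton_self _
  refine hX.2 _ _ (Market.isBlocking_singleton (hr 2) (prefers_rC_two hr) (by simp [sN, rC]) ?_)
  have hmpos : (0 : ℝ) < m := by exact_mod_cast hm
  calc α * (𝒩).uSum ((𝒩).restrH X' ((𝒩).hos (rC i 2)))
      ≤ α * (2 * α / m) := mul_le_mul_of_nonneg_left (Market.uSum_le_of_subset_singleton hsub) hα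
    _ < 1 := by rw [← mul_div_assoc, div_lt_one hmpos]; linarith
    _ = (𝒩).u (rC i 2) := by simp [uN, rC]

theorem zC_mem_of_xC_yC_notMem (hX : (𝒩).IsStable α X') (hα0 : 0 < α)
    {j : Fin (m - 1)} (hx : xC i ⟨j, by omega⟩ ∉ X')
    (hy : ∀ j' : Fin (m - 1), (j' : ℕ) + 1 = j → yC i j' ∉ X') :
    zC i j ∈ X' := by
  by_contra hz
  have hsub : (𝒩).restrH X' ((𝒩).hos (zC i j)) ⊆ {yC i j} := fun c hc => by
    obtain ⟨hcX, hch⟩ := Market.mem_restrH.mp hc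
    rcases eq_of_hosN_eq_hosN_zC hch with rfl | rfl
    · exact Finset.mem_singleton_self _
    · exact absurd hcX hz
  refine hX.2 _ _ (Market.isBlocking_singleton hz (prefers_zC hx hy hz) (by simp [sN, zC]) ?_)
  calc α * (𝒩).uSum ((𝒩).restrH X' ((𝒩).hos (zC i j)))
      ≤ α * 1 := mul_le_mul_of_nonneg_left (Market.uSum_le_of_subset_singleton hsub) hα
    _ < 2 * α := by linarith
    _ = (𝒩).u (zC i j) := by simp [uN, zC]

theorem zC_mem_of_rC_two_mem (hX : (𝒩).IsStable α X') (hα0 : 0 < α) (hr : rC i 2 ∈ X')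
    (j : ℕ) (hj : j < m - 1) : zC i ⟨j, hj⟩ ∈ X' := by
  induction j with
  | zero => exact zC_mem_of_xC_yC_notMem hX hα0 (xC_notMem_of_rC_two_mem hX.1 hr _) (by simp)
  | succ j ih =>
    refine zC_mem_of_xC_yC_notMem hX hα0 (xC_notMem_of_rC_two_mem hX.1 hr _) fun j' hj' => ?_
    obtain rfl : j' = ⟨j, Nat.lt_of_succ_lt hj⟩ := Fin.ext (by simpa using hj')
    exact yC_notMem_of_zC_mem hX.1 (ih _)

theorem not_isStable_of_rC_two_mem (hα0 : 0 < α) (hr : rC i 2 ∈ X') :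
    ¬ (𝒩).IsStable α X' := fun hX => by
  have hsub : (𝒩).restrH X' ((𝒩).hos (rC i 2)) ⊆ {rC i 2} := fun c hc => by
    obtain ⟨hcX, hch⟩ := Market.mem_restrH.mp hc
    rcases eq_of_hosN_eq_hosN_xC (j := ⟨0, hm⟩) hch with rfl | ⟨j, rfl⟩
    · exact Finset.mem_singleton_self _
    · exact absurd hcX (xC_notMem_of_rC_two_mem hX.1 hr j)
  refine hX.2 ((𝒩).hos (rC i 2)) (xCs i) ⟨?_, isMatching_xCs, ?_, ?_⟩
  · intro c hc
    obtain ⟨j, rfl⟩ := mem_xCs.mp hc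
    rfl
  · intro c hc
    obtain ⟨j, rfl⟩ := mem_xCs.mp (Finset.mem_sdiff.mp hc).1
    exact prefers_xC (Finset.mem_sdiff.mp hc).2
      fun j' _ => yC_notMem_of_zC_mem hX.1 (zC_mem_of_rC_two_mem hX hα0 hr j' j'.isLt)
  · calc α * (𝒩).uSum ((𝒩).restrH X' ((𝒩).hos (rC i 2)))
        ≤ α * 1 := mul_le_mul_of_nonneg_left (Market.uSum_le_of_subset_singleton hsub) hα
      _ < 2 * α := by linarith
      _ = (𝒩).uSum (xCs i) := uSum_xCs.symm

theorem not_isStable_of_rC_zero_notMem_of_rC_one_notMem (hα0 : 0 < α) (hm2 : 2 * α ^ 2 < m)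
    (h0 : rC i 0 ∉ X') (h1 : rC i 1 ∉ X') : ¬ (𝒩).IsStable α X' := by
  by_cases h2 : rC i 2 ∈ X'
  · exact not_isStable_of_rC_two_mem hα0 h2
  · exact not_isStable_of_forall_rC_notMem hm2 fun k => by fin_cases k <;> assumption

theorem sN_rC_zero (i : Fin n) : sN n m a t (rC i 0) = a i / t := rfl

theorem sN_rC_one (i : Fin n) : sN n m a t (rC i 1) = a i / (∑ j, (a j : ℝ) - t) := rfl

theorem sum_filter_rC_zero_mem_le (hX : (𝒩).IsMatching X') (ht : 0 < t) :
    ∑ i with rC i 0 ∈ X', (a i : ℝ) ≤ t := by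
  have h := hX.sum_s_le_one (S := {i | rC i 0 ∈ X'}) (rC_injective 0).injOn (h := .inl 0)
    fun i hi => ⟨(Finset.mem_filter.mp hi).2, rfl⟩
  simp only [mkt_s, sN_rC_zero] at h
  rwa [← Finset.sum_div, div_le_one (by positivity)] at h

theorem sum_filter_rC_one_mem_le (hX : (𝒩).IsMatching X') :
    ∑ i with rC i 1 ∈ X', (a i : ℝ) ≤ ∑ i, (a i : ℝ) - t := by
  have h := hX.sum_s_le_one (S := {i | rC i 1 ∈ X'}) (rC_injective 1).injOn (h := .inl 1)
    fun i hi => ⟨(Finset.mem_filter.mp hi).2, rfl⟩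
  simp only [mkt_s, sN_rC_one] at h
  rwa [← Finset.sum_div, div_le_one (by linarith)] at h

theorem exists_sum_eq_of_isMatching (hX : (𝒩).IsMatching X') (ht : 0 < t)
    (hr : ∀ i, rC i 0 ∈ X' ∨ rC i 1 ∈ X') : ∃ I : Finset (Fin n), ∑ i ∈ I, a i = t := by
  refine ⟨({i | rC i 0 ∈ X'} : Finset (Fin n)), ?_⟩
  have hcompl : ∑ i with rC i 0 ∉ X', (a i : ℝ) ≤ ∑ i with rC i 1 ∈ X', (a i : ℝ) :=
    Finset.sum_le_sum_of_subset_of_nonneg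
      (Finset.monotone_filter_right _ fun i _ => (hr i).resolve_left) fun _ _ _ => by positivity
  have hsplit := Finset.sum_filter_add_sum_filter_not Finset.univ (fun i => rC i 0 ∈ X')
    fun i => (a i : ℝ)
  have hplus := sum_filter_rC_zero_mem_le hX ht
  have hminus := sum_filter_rC_one_mem_le hX
  exact_mod_cast (show ∑ i with rC i 0 ∈ X', (a i : ℝ) = t by linarith)

end SubsetSumGen

/-- (No-instance direction of the subset-sum reduction.) Let `α > 1` and
`m = ⌈3α²⌉`. If no subset `I` of `{1,…,n}` satisfies `Σ_{i∈I} aᵢ = t`, then the market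
`N(a,t,α)` admits no `α`-stable matching; more precisely, any matching `X'` with
`X' ∩ {r^{i*,1}, r^{i*,2}} = ∅` for some index `i*` is not `α`-stable. -/
theorem subsetSumGen_no_instance_unstable (α : ℝ) (hα : 1 < α) (n : ℕ) (a : Fin n → ℕ)
    (t : ℕ) (ht : 0 < t) (hta : t < ∑ i, a i)
    (m : ℕ) (hm : m = ⌈3 * α ^ 2⌉₊)
    (hno : ¬ ∃ I : Finset (Fin n), ∑ i ∈ I, a i = t) :
    (¬ ∃ X' : Finset (SubsetSumGen.XN n m),
        (SubsetSumGen.mkt n m a t α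
          (by rw [hm]; exact Nat.ceil_pos.mpr (by positivity))
          (by exact_mod_cast hta) (by linarith)).IsStable α X') ∧
    (∀ X' : Finset (SubsetSumGen.XN n m),
      (SubsetSumGen.mkt n m a t α
          (by rw [hm]; exact Nat.ceil_pos.mpr (by positivity))
          (by exact_mod_cast hta) (by linarith)).IsMatching X' →
      (∃ istar : Fin n,
          (Sum.inl (istar, (0 : Fin 3)) : SubsetSumGen.XN n m) ∉ X' ∧
          (Sum.inl (istar, (1 : Fin 3)) : SubsetSumGen.XN n m) ∉ X') →
      ¬ (SubsetSumGen.mkt n m a t α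
          (by rw [hm]; exact Nat.ceil_pos.mpr (by positivity))
          (by exact_mod_cast hta) (by linarith)).IsStable α X') := by
  have hm2 : 2 * α ^ 2 < m := by
    have := Nat.le_ceil (3 * α ^ 2)
    rw [hm]
    nlinarith
  have hα0 : 0 < α := by linarith
  refine ⟨fun ⟨X', hX⟩ => hno ?_, fun X' _ ⟨i, h0, h1⟩ =>
    SubsetSumGen.not_isStable_of_rC_zero_notMem_of_rC_one_notMem hα0 hm2 h0 h1⟩
  refine SubsetSumGen.exists_sum_eq_of_isMatching hX.1 ht fun i => ?_
  by_contra! h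
  exact SubsetSumGen.not_isStable_of_rC_zero_notMem_of_rC_one_notMem hα0 hm2 h.1 h.2 hX
end
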